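/- arXiv:1703.00438 — 5 statements merged into one kernel-verified Lean document; each statement's English description precedes it below -/
import Mathlib

section
/- (Macaulay's theorem, forward direction) For every nonzero homogeneous polynomial f ∈ D of degree ν, the set f^⊥ = {g ∈ S : g ∘ f = 0} is a homogeneous ideal of S, and the quotient A = S/f^⊥ is a finite-dimensional graded k-algebra with A_ν ≠ 0, A_j = 0 for all j > ν, and 1-dimensional socle Soc(A) = {a ∈ A : a·A_+ = 0}; that is, S/f^⊥ is a Gorenstein Artin k-algebra of socle degree ν. -/
open MvPolynomial

/-- The operator `∂^m = ∏ᵢ (∂/∂zᵢ)^{mᵢ}` on `k[z_1,…,z_n]`. -/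
noncomputable def monDiff (k : Type*) [CommRing k] {n : ℕ} (m : Fin n →₀ ℕ) :
    Module.End k (MvPolynomial (Fin n) k) :=
  (List.ofFn fun i : Fin n =>
    ((MvPolynomial.pderiv i).toLinearMap : Module.End k (MvPolynomial (Fin n) k)) ^ (m i)).prod

/-- The apolarity action: `apolar g f = g(∂/∂z_1,…,∂/∂z_n) f`. -/
noncomputable def apolar {k : Type*} [CommRing k] {n : ℕ}
    (g f : MvPolynomial (Fin n) k) : MvPolynomial (Fin n) k :=
  ∑ m ∈ g.support, g.coeff m • (monDiff k m f)

/-- The socle of `A` relative to an ideal `P` (for us, the irrelevant maximal ideal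
`A₊`): `Soc(A) = {a ∈ A : a ⬝ P = 0}`, a `k`-submodule of `A`. -/
def socle (k : Type*) {A : Type*} [CommRing k] [CommRing A] [Algebra k A] (P : Ideal A) :
    Submodule k A where
  carrier := {x | ∀ y ∈ P, x * y = 0}
  add_mem' := by
    intro a b ha hb y hy
    rw [add_mul, ha y hy, hb y hy, add_zero]
  zero_mem' := by
    intro y hy
    rw [zero_mul]
  smul_mem' := by
    intro c x hx y hy
    rw [Algebra.smul_def, mul_assoc, hx y hy, mul_zero]

set_option synthInstance.maxHeartbeats 800000
set_option maxHeartbeats 1600000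

namespace MacaulayAux

variable {k : Type*} [CommRing k] {n : ℕ}

/-- `∂/∂zᵢ` as a linear endomorphism. -/
noncomputable def pd (k : Type*) [CommRing k] {n : ℕ} (i : Fin n) :
    Module.End k (MvPolynomial (Fin n) k) :=
  (MvPolynomial.pderiv i).toLinearMap

lemma pderiv_pderiv (i j : Fin n) (p : MvPolynomial (Fin n) k) :
    pderiv i (pderiv j p) = pderiv j (pderiv i p) := by
  induction p using MvPolynomial.induction_on' with
  | monomial s a =>
    rcases eq_or_ne i j with rfl | hij
    · rfl
    · simp only [pderiv_monomial]
      rw [Finsupp.tsub_apply, Finsupp.tsub_apply, Finsupp.single_apply,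
        Finsupp.single_apply, if_neg hij, if_neg (Ne.symm hij), tsub_zero, tsub_zero,
        tsub_tsub, tsub_tsub, add_comm]
      ring_nf
  | add p q hp hq => simp [hp, hq]

lemma pd_comm (i j : Fin n) : pd k i * pd k j = pd k j * pd k i := by
  apply LinearMap.ext
  intro p
  show pderiv i (pderiv j p) = pderiv j (pderiv i p)
  exact pderiv_pderiv i j p



/-- The (commutative) subalgebra of `End (k[z])` generated by the partial derivatives. -/
noncomputable def DiffAlg (k : Type*) [CommRing k] (n : ℕ) :
    Subalgebra k (Module.End k (MvPolynomial (Fin n) k)) :=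
  Algebra.adjoin k (Set.range (pd k (n := n)))

noncomputable instance : CommRing (DiffAlg k n) :=
  { (DiffAlg k n).toRing with
    mul_comm := (Algebra.isMulCommutative_adjoin k (by
      rintro a ⟨i, rfl⟩ b ⟨j, rfl⟩
      exact pd_comm i j)).is_comm.comm }

/-- `∂/∂zᵢ` as an element of `DiffAlg`. -/
noncomputable def Pd (k : Type*) [CommRing k] {n : ℕ} (i : Fin n) : DiffAlg k n :=
  ⟨pd k i, Algebra.subset_adjoin ⟨i, rfl⟩⟩

/-- Evaluation of polynomials at the partial derivatives, as an algebra map. -/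
noncomputable def Phi (k : Type*) [CommRing k] {n : ℕ} :
    MvPolynomial (Fin n) k →ₐ[k] DiffAlg k n :=
  aeval (Pd k)

lemma monDiff_eq (m : Fin n →₀ ℕ) :
    monDiff k m = ((∏ i, Pd k i ^ m i : DiffAlg k n) : Module.End k (MvPolynomial (Fin n) k)) := by
  rw [← Fin.prod_ofFn (fun i => Pd k i ^ m i)]
  show monDiff k m = (DiffAlg k n).val (List.ofFn fun i => Pd k i ^ m i).prod
  rw [map_list_prod ((DiffAlg k n).val) _, List.map_ofFn]
  rfl

lemma Phi_monomial (m : Fin n →₀ ℕ) (c : k) :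
    ((Phi k (monomial m c) : DiffAlg k n) : Module.End k (MvPolynomial (Fin n) k))
      = c • monDiff k m := by
  rw [Phi, aeval_monomial, monDiff_eq, Finsupp.prod_pow]
  rw [Algebra.smul_def]
  simp


lemma apolar_eq (g f : MvPolynomial (Fin n) k) :
    apolar g f = ((Phi k g : DiffAlg k n) : Module.End k (MvPolynomial (Fin n) k)) f := by
  conv_rhs => rw [g.as_sum]
  rw [map_sum (Phi k)]
  show apolar g f =
    ((DiffAlg k n).val (∑ x ∈ g.support, (Phi k) ((monomial x) (coeff x g)))) f
  rw [map_sum ((DiffAlg k n).val), LinearMap.coe_sum, Finset.sum_apply]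
  refine Finset.sum_congr rfl fun m hm => ?_
  rw [show ((DiffAlg k n).val (Phi k (monomial m (coeff m g)))) =
    ((Phi k (monomial m (coeff m g)) : DiffAlg k n) :
      Module.End k (MvPolynomial (Fin n) k)) from rfl, Phi_monomial]
  rfl

lemma apolar_mul (g h f : MvPolynomial (Fin n) k) :
    apolar (g * h) f = apolar g (apolar h f) := by
  rw [apolar_eq, apolar_eq, apolar_eq, map_mul]
  rfl

lemma apolar_monomial (m : Fin n →₀ ℕ) (c : k) (f : MvPolynomial (Fin n) k) :
    apolar (monomial m c) f = c • monDiff k m f := by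
  rw [apolar_eq, Phi_monomial]
  rfl

lemma apolar_add_left (g h f : MvPolynomial (Fin n) k) :
    apolar (g + h) f = apolar g f + apolar h f := by
  rw [apolar_eq, apolar_eq, apolar_eq, map_add]
  rfl

lemma apolar_sub_left (g h f : MvPolynomial (Fin n) k) :
    apolar (g - h) f = apolar g f - apolar h f := by
  rw [apolar_eq, apolar_eq, apolar_eq, map_sub]
  rfl

lemma apolar_zero_left (f : MvPolynomial (Fin n) k) : apolar 0 f = 0 := by
  rw [apolar_eq, map_zero]
  rfl

lemma apolar_zero_right (g : MvPolynomial (Fin n) k) : apolar g 0 = 0 := by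
  rw [apolar_eq]
  exact map_zero _

lemma apolar_sum_left {ι : Type*} (s : Finset ι) (p : ι → MvPolynomial (Fin n) k)
    (f : MvPolynomial (Fin n) k) :
    apolar (∑ i ∈ s, p i) f = ∑ i ∈ s, apolar (p i) f := by
  classical
  induction s using Finset.induction_on with
  | empty => simp [apolar_zero_left]
  | insert _ _ hne ih =>
    rw [Finset.sum_insert ‹_›, Finset.sum_insert ‹_›, apolar_add_left, ih]

lemma apolar_X (i : Fin n) (f : MvPolynomial (Fin n) k) :
    apolar (X i) f = pderiv i f := by
  rw [apolar_eq, Phi, aeval_X]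
  rfl

lemma apolar_smul_left (c : k) (g f : MvPolynomial (Fin n) k) :
    apolar (c • g) f = c • apolar g f := by
  rw [apolar_eq, apolar_eq, map_smul]
  rfl

lemma pow_pd_monomial (i : Fin n) (j : ℕ) (m : Fin n →₀ ℕ) (c : k) :
    (pd k i ^ j) (monomial m c) =
      monomial (m - Finsupp.single i j) (c * ((m i).descFactorial j : k)) := by
  induction j with
  | zero => simp
  | succ j ih =>
    rw [pow_succ', Module.End.mul_apply, ih]
    show pderiv i _ = _
    rw [pderiv_monomial, tsub_tsub, ← Finsupp.single_add, Finsupp.tsub_apply,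
      Finsupp.single_eq_same, Nat.descFactorial_succ]
    congr 1
    push_cast
    ring

lemma prod_Pd_monomial (t : Finset (Fin n)) (m m' : Fin n →₀ ℕ) (c : k) :
    ((∏ i ∈ t, Pd k i ^ m i : DiffAlg k n) : Module.End k (MvPolynomial (Fin n) k))
        (monomial m' c)
      = monomial (m' - ∑ i ∈ t, Finsupp.single i (m i))
          (c * ∏ i ∈ t, ((m' i).descFactorial (m i) : k)) := by
  classical
  induction t using Finset.induction_on with
  | empty => simp
  | @insert a t ha ih =>
    rw [Finset.prod_insert ha, Finset.prod_insert ha, Finset.sum_insert ha]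
    rw [MulMemClass.coe_mul, Module.End.mul_apply, ih]
    have hPd : ((Pd k a ^ m a : DiffAlg k n) :
        Module.End k (MvPolynomial (Fin n) k)) = pd k a ^ m a := by
      rw [SubmonoidClass.coe_pow]
      rfl
    rw [hPd, pow_pd_monomial]
    have hsum : (∑ i ∈ t, Finsupp.single i (m i)) a = 0 := by
      rw [Finsupp.finset_sum_apply]
      refine Finset.sum_eq_zero fun i hi => ?_
      exact Finsupp.single_eq_of_ne' (fun h => ha (h ▸ hi))
    rw [Finsupp.tsub_apply, hsum, tsub_zero, tsub_tsub, add_comm]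
    congr 1
    ring

lemma univ_sum_single (m : Fin n →₀ ℕ) :
    (∑ i : Fin n, Finsupp.single i (m i)) = m := by
  ext j
  rw [Finsupp.finset_sum_apply]
  rw [Finset.sum_eq_single j (fun i _ hij => Finsupp.single_eq_of_ne' hij)
    (fun h => absurd (Finset.mem_univ j) h)]
  exact Finsupp.single_eq_same

lemma monDiff_monomial (m m' : Fin n →₀ ℕ) (c : k) :
    monDiff k m (monomial m' c)
      = monomial (m' - m) (c * ∏ i, ((m' i).descFactorial (m i) : k)) := by
  rw [monDiff_eq, prod_Pd_monomial, univ_sum_single]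

lemma degree_eq_sum_univ (m : Fin n →₀ ℕ) : m.degree = ∑ i, m i := by
  rw [Finsupp.degree]
  exact Finset.sum_subset (Finset.subset_univ _)
    (fun i _ hi => Finsupp.notMem_support_iff.mp hi)

/-- If the orders of differentiation exceed the monomial degree, the result vanishes. -/
lemma monDiff_monomial_eq_zero {m m' : Fin n →₀ ℕ} (h : m'.degree < m.degree) (c : k) :
    monDiff k m (monomial m' c) = 0 := by
  obtain ⟨i, hi⟩ : ∃ i, m' i < m i := by
    by_contra hc
    push_neg at hc
    refine absurd ?_ (not_le.mpr h)
    rw [degree_eq_sum_univ, degree_eq_sum_univ]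
    exact Finset.sum_le_sum fun i _ => hc i
  rw [monDiff_monomial, Finset.prod_eq_zero (Finset.mem_univ i)
    (by rw [Nat.descFactorial_eq_zero_iff_lt.mpr hi, Nat.cast_zero]), mul_zero,
    monomial_zero]

lemma degree_of_mem_support {g : MvPolynomial (Fin n) k} {d : ℕ}
    (hg : g.IsHomogeneous d) {m : Fin n →₀ ℕ} (hm : m ∈ g.support) : m.degree = d := by
  rw [Finsupp.degree_eq_weight_one]
  exact hg (mem_support_iff.mp hm)

lemma monDiff_isHomogeneous {f : MvPolynomial (Fin n) k} {ν d : ℕ}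
    (m : Fin n →₀ ℕ) (hmd : m.degree = d)
    (hf : f.IsHomogeneous ν) :
    (monDiff k m f).IsHomogeneous (ν - d) := by
  rw [f.as_sum, map_sum]
  apply IsHomogeneous.sum
  intro m' hm'
  have hm'ν : m'.degree = ν := degree_of_mem_support hf hm'
  rw [monDiff_monomial]
  by_cases hex : ∃ i, m' i < m i
  · obtain ⟨i, hi⟩ := hex
    rw [Finset.prod_eq_zero (Finset.mem_univ i)
      (by rw [Nat.descFactorial_eq_zero_iff_lt.mpr hi, Nat.cast_zero]), mul_zero,
      monomial_zero]
    exact isHomogeneous_zero _ _ _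
  · push_neg at hex
    apply isHomogeneous_monomial
    have : (m' - m).degree = ∑ i, (m' i - m i) := by
      rw [degree_eq_sum_univ]
      exact Finset.sum_congr rfl fun i _ => Finsupp.tsub_apply m' m i
    rw [this, Finset.sum_tsub_distrib _ (fun i _ => hex i),
      ← degree_eq_sum_univ, ← degree_eq_sum_univ, hmd, hm'ν]

lemma apolar_isHomogeneous {g f : MvPolynomial (Fin n) k} {d ν : ℕ}
    (hg : g.IsHomogeneous d) (hf : f.IsHomogeneous ν) :
    (apolar g f).IsHomogeneous (ν - d) := by
  apply IsHomogeneous.sum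
  intro m hm
  rw [MvPolynomial.smul_eq_C_mul]
  exact (monDiff_isHomogeneous m (degree_of_mem_support hg hm) hf).C_mul _

lemma apolar_eq_zero_of_gt {g f : MvPolynomial (Fin n) k} {d ν : ℕ}
    (hg : g.IsHomogeneous d) (hf : f.IsHomogeneous ν) (h : ν < d) :
    apolar g f = 0 := by
  apply Finset.sum_eq_zero
  intro m hm
  have hmd : m.degree = d := degree_of_mem_support hg hm
  have : monDiff k m f = 0 := by
    rw [f.as_sum, map_sum]
    apply Finset.sum_eq_zero
    intro m' hm'
    exact monDiff_monomial_eq_zero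
      (by rw [hmd, degree_of_mem_support hf hm']; exact h) _
  rw [this, smul_zero]

lemma sub_single_one_eq_iff {m m' : Fin n →₀ ℕ} {i : Fin n}
    (hm : m i ≠ 0) (hm' : m' i ≠ 0)
    (h : m' - Finsupp.single i 1 = m - Finsupp.single i 1) : m' = m := by
  ext j
  have hj := congrArg (fun x : Fin n →₀ ℕ => x j) h
  simp only [Finsupp.tsub_apply, Finsupp.single_apply] at hj
  rcases eq_or_ne i j with rfl | hij
  · rw [if_pos rfl] at hj
    omega
  · simpa [if_neg hij] using hj

section CharZero

variable {k : Type*} [Field k] [CharZero k] {n : ℕ}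

lemma coeff_eq_zero_of_pderiv_eq_zero {p : MvPolynomial (Fin n) k} {i : Fin n}
    (hp : pderiv i p = 0) {m : Fin n →₀ ℕ} (hm : m i ≠ 0) : coeff m p = 0 := by
  by_cases hmem : m ∈ p.support
  · have key : coeff (m - Finsupp.single i 1) (pderiv i p)
        = coeff m p * (m i : k) := by
      conv_lhs => rw [p.as_sum, map_sum]
      rw [coeff_sum]
      rw [Finset.sum_eq_single_of_mem m hmem]
      · rw [pderiv_monomial, coeff_monomial, if_pos rfl]
      · intro m' hm' hne
        rw [pderiv_monomial, coeff_monomial]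
        split_ifs with hcond
        · by_cases hz : m' i = 0
          · rw [hz, Nat.cast_zero, mul_zero]
          · exact absurd (sub_single_one_eq_iff hm hz hcond) hne
        · rfl
    rw [hp, coeff_zero] at key
    have := key.symm
    rcases mul_eq_zero.mp this with h | h
    · exact h
    · exact absurd (Nat.cast_eq_zero.mp h) hm
  · exact notMem_support_iff.mp hmem

lemma eq_C_of_pderiv_eq_zero {p : MvPolynomial (Fin n) k}
    (hp : ∀ i, pderiv i p = 0) : p = C (coeff 0 p) := by
  ext m
  rcases eq_or_ne m 0 with rfl | hm
  · simp
  · obtain ⟨i, hi⟩ := Finsupp.support_nonempty_iff.mpr hm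
    rw [coeff_eq_zero_of_pderiv_eq_zero (hp i) (Finsupp.mem_support_iff.mp hi),
      coeff_C, if_neg (fun h => hm h.symm)]

variable (f : MvPolynomial (Fin n) k)

/-- The apolarity annihilator `f^⊥`. -/
noncomputable def perp : Ideal (MvPolynomial (Fin n) k) where
  carrier := {g | apolar g f = 0}
  add_mem' := by
    intro a b ha hb
    show apolar (a + b) f = 0
    rw [apolar_add_left, Set.mem_setOf_eq.mp ha, Set.mem_setOf_eq.mp hb, add_zero]
  zero_mem' := apolar_zero_left f
  smul_mem' := by
    intro c x hx
    show apolar (c • x) f = 0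
    rw [smul_eq_mul, apolar_mul, Set.mem_setOf_eq.mp hx, apolar_zero_right]

lemma mem_perp {g : MvPolynomial (Fin n) k} : g ∈ perp f ↔ apolar g f = 0 := Iff.rfl

variable {f} {ν : ℕ}

lemma perp_gt (hfhom : f.IsHomogeneous ν) :
    ∀ p : MvPolynomial (Fin n) k, ∀ j : ℕ, ν < j → p.IsHomogeneous j → p ∈ perp f :=
  fun _ _ hj hp => (mem_perp f).mpr (apolar_eq_zero_of_gt hp hfhom hj)

lemma perp_homogeneous (hfhom : f.IsHomogeneous ν) :
    ∀ g ∈ perp f, ∀ j : ℕ, homogeneousComponent j g ∈ perp f := by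
  intro g hg j
  by_cases hjν : ν < j
  · exact perp_gt hfhom _ j hjν (homogeneousComponent_isHomogeneous j g)
  · push_neg at hjν
    rw [mem_perp]
    have hsum : ∑ t ∈ Finset.range (g.totalDegree + 1),
        apolar (homogeneousComponent t g) f = 0 := by
      rw [← apolar_sum_left, sum_homogeneousComponent]
      exact (mem_perp f).mp hg
    by_cases hjr : j ∈ Finset.range (g.totalDegree + 1)
    · have h0 := congrArg (homogeneousComponent (ν - j)) hsum
      rw [map_sum, map_zero] at h0
      rw [Finset.sum_eq_single_of_mem j hjr ?side] at h0
      case side =>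
        intro t ht htj
        by_cases htν : ν < t
        · rw [apolar_eq_zero_of_gt (homogeneousComponent_isHomogeneous t g) hfhom htν,
            map_zero]
        · push_neg at htν
          rw [homogeneousComponent_of_mem
            ((mem_homogeneousSubmodule _ _).mpr
              (apolar_isHomogeneous (homogeneousComponent_isHomogeneous t g) hfhom)),
            if_neg (by omega)]
      rwa [homogeneousComponent_of_mem
        ((mem_homogeneousSubmodule _ _).mpr
          (apolar_isHomogeneous (homogeneousComponent_isHomogeneous j g) hfhom)),
        if_pos rfl] at h0
    · rw [homogeneousComponent_eq_zero, apolar_zero_left]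
      rw [Finset.mem_range] at hjr
      omega

lemma mk_smul (I : Ideal (MvPolynomial (Fin n) k)) (c : k) (x : MvPolynomial (Fin n) k) :
    Ideal.Quotient.mk I (c • x) = c • Ideal.Quotient.mk I x := by
  rw [← Ideal.Quotient.mkₐ_eq_mk (R₁ := k)]
  exact map_smul _ c x

lemma perp_finite (hfhom : f.IsHomogeneous ν) :
    Module.Finite k (MvPolynomial (Fin n) k ⧸ perp f) := by
  classical
  set I := perp f
  set mk := Ideal.Quotient.mk I
  set M₀ : Fin n →₀ ℕ := Finsupp.equivFunOnFinite.symm (fun _ => ν) with hM₀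
  set s : Set (MvPolynomial (Fin n) k ⧸ I) :=
    mk '' ((fun m => (monomial m (1 : k))) '' ↑(Finset.Iic M₀)) with hs
  have hfin : s.Finite := (((Finset.Iic M₀).finite_toSet).image _).image _
  refine ⟨Submodule.fg_def.mpr ⟨s, hfin, ?_⟩⟩
  rw [Submodule.eq_top_iff']
  intro x
  obtain ⟨g, rfl⟩ := Ideal.Quotient.mk_surjective x
  have hhom : ∀ (d : ℕ), d ≤ ν → ∀ p : MvPolynomial (Fin n) k, p.IsHomogeneous d →
      mk p ∈ Submodule.span k s := by
    intro d hd p hp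
    rw [p.as_sum, map_sum]
    apply Submodule.sum_mem
    intro m hm
    have h1 : (monomial m (coeff m p)) = coeff m p • (monomial m (1 : k)) := by
      rw [smul_monomial, smul_eq_mul, mul_one]
    rw [h1, mk_smul]
    refine Submodule.smul_mem _ _ (Submodule.subset_span ?_)
    refine ⟨monomial m 1, ⟨m, ?_, rfl⟩, rfl⟩
    rw [Finset.mem_coe, Finset.mem_Iic]
    intro i
    calc m i ≤ m.degree := Finsupp.le_degree i m
    _ = d := degree_of_mem_support hp hm
    _ ≤ ν := hd
  rw [show mk g = ∑ t ∈ Finset.range (g.totalDegree + 1), mk (homogeneousComponent t g) by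
    rw [← map_sum]
    congr 1
    exact (sum_homogeneousComponent g).symm]
  apply Submodule.sum_mem
  intro t _
  by_cases htν : t ≤ ν
  · exact hhom t htν _ (homogeneousComponent_isHomogeneous t g)
  · push_neg at htν
    rw [Ideal.Quotient.eq_zero_iff_mem.mpr
      (perp_gt hfhom _ t htν (homogeneousComponent_isHomogeneous t g))]
    exact Submodule.zero_mem _

lemma coeff_zero_monDiff_self (hfhom : f.IsHomogeneous ν) {m₀ : Fin n →₀ ℕ}
    (hm₀ : m₀ ∈ f.support) :
    coeff 0 (monDiff k m₀ f) = coeff m₀ f * ∏ i, ((m₀ i).factorial : k) := by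
  conv_lhs => rw [f.as_sum, map_sum]
  rw [coeff_sum]
  rw [Finset.sum_eq_single_of_mem m₀ hm₀]
  · rw [monDiff_monomial, tsub_self, coeff_monomial, if_pos rfl]
    congr 1
    exact Finset.prod_congr rfl fun i _ => by rw [Nat.descFactorial_self]
  · intro m' hm' hne
    rw [monDiff_monomial, coeff_monomial]
    split_ifs with h
    · exfalso
      apply hne
      have hle : ∀ i, m' i ≤ m₀ i := by
        intro i
        have hi := congrArg (fun x : Fin n →₀ ℕ => x i) h
        simp only [Finsupp.tsub_apply, Finsupp.coe_zero, Pi.zero_apply] at hi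
        omega
      have hdeg : ∑ i, m₀ i = ∑ i, m' i := by
        rw [← degree_eq_sum_univ, ← degree_eq_sum_univ,
          degree_of_mem_support hfhom hm₀, degree_of_mem_support hfhom hm']
      ext i
      by_contra hne2
      have : ∑ i, m' i < ∑ i, m₀ i :=
        Finset.sum_lt_sum (fun i _ => hle i)
          ⟨i, Finset.mem_univ i, lt_of_le_of_ne (hle i) hne2⟩
      omega
    · rfl

lemma apolar_monomial_one_ne_zero (hfhom : f.IsHomogeneous ν) {m₀ : Fin n →₀ ℕ}
    (hm₀ : m₀ ∈ f.support) :
    coeff 0 (apolar (monomial m₀ (1 : k)) f) ≠ 0 := by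
  rw [apolar_monomial, one_smul, coeff_zero_monDiff_self hfhom hm₀]
  apply mul_ne_zero (mem_support_iff.mp hm₀)
  rw [← Nat.cast_prod]
  exact Nat.cast_ne_zero.mpr
    (Finset.prod_pos fun i _ => Nat.factorial_pos _).ne'

end CharZero


section Socle

variable {k : Type*} [Field k] [CharZero k] {n : ℕ} {f : MvPolynomial (Fin n) k} {ν : ℕ}

lemma perp_mul_mem (hfhom : f.IsHomogeneous ν) {g : MvPolynomial (Fin n) k}
    (hg : ∀ i, X i * g ∈ perp f) {h : MvPolynomial (Fin n) k}
    (hh : h ∈ Ideal.span (Set.range (X : Fin n → MvPolynomial (Fin n) k))) :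
    g * h ∈ perp f := by
  rw [mem_perp]
  refine Submodule.span_induction (p := fun h _ => apolar (g * h) f = 0)
    ?_ ?_ ?_ ?_ hh
  · rintro x ⟨i, rfl⟩
    rw [mul_comm]
    exact (mem_perp f).mp (hg i)
  · show apolar (g * 0) f = 0
    rw [mul_zero, apolar_zero_left]
  · intro x y _ _ hx hy
    rw [mul_add, apolar_add_left, hx, hy, add_zero]
  · intro c x _ hx
    rw [smul_eq_mul, show g * (c * x) = c * (g * x) by ring, apolar_mul, hx,
      apolar_zero_right]

lemma perp_socle_const (hfhom : f.IsHomogeneous ν) {g : MvPolynomial (Fin n) k}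
    (hg : ∀ i, X i * g ∈ perp f) :
    apolar g f = C (coeff 0 (apolar g f)) := by
  apply eq_C_of_pderiv_eq_zero
  intro i
  rw [← apolar_X, ← apolar_mul]
  exact (mem_perp f).mp (hg i)

lemma perp_socle (hf0 : f ≠ 0) (hfhom : f.IsHomogeneous ν) :
    Module.finrank k
      (socle k (Ideal.map (Ideal.Quotient.mk (perp f))
        (Ideal.span (Set.range (X : Fin n → MvPolynomial (Fin n) k))))) = 1 := by
  classical
  set I := perp f with hI
  set mk := Ideal.Quotient.mk I with hmk
  set P := Ideal.map mk (Ideal.span (Set.range (X : Fin n → MvPolynomial (Fin n) k)))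
    with hP
  obtain ⟨m₀, hm₀⟩ : f.support.Nonempty := by
    rw [MvPolynomial.support_nonempty]
    exact hf0
  set g₀ : MvPolynomial (Fin n) k := monomial m₀ (1 : k) with hg₀
  have hg₀hom : g₀.IsHomogeneous ν :=
    isHomogeneous_monomial 1 (degree_of_mem_support hfhom hm₀)
  have hXg₀ : ∀ i, X i * g₀ ∈ I := fun i =>
    perp_gt hfhom _ (1 + ν) (by omega) ((isHomogeneous_X k i).mul hg₀hom)
  set c0 : k := coeff 0 (apolar g₀ f) with hc0
  have hc0ne : c0 ≠ 0 := apolar_monomial_one_ne_zero hfhom hm₀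
  have hg₀C : apolar g₀ f = C c0 := perp_socle_const hfhom hXg₀
  have hg₀I : g₀ ∉ I := by
    rw [hI, mem_perp]
    intro hc
    rw [hc, coeff_zero] at hc0
    exact hc0ne hc0
  have hw₀mem : mk g₀ ∈ socle k P := by
    intro y hy
    rw [hP, Ideal.mem_map_iff_of_surjective _ Ideal.Quotient.mk_surjective] at hy
    obtain ⟨h, hh, rfl⟩ := hy
    rw [← map_mul, Ideal.Quotient.eq_zero_iff_mem]
    exact perp_mul_mem hfhom hXg₀ hh
  set w₀ : socle k P := ⟨mk g₀, hw₀mem⟩ with hw₀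
  have hw₀ne : w₀ ≠ 0 := by
    intro hc
    apply hg₀I
    rw [← Ideal.Quotient.eq_zero_iff_mem]
    exact Subtype.ext_iff.mp hc
  refine finrank_eq_one w₀ hw₀ne ?_
  intro w
  obtain ⟨g, hg⟩ := Ideal.Quotient.mk_surjective (w : MvPolynomial (Fin n) k ⧸ I)
  have hXg : ∀ i, X i * g ∈ I := by
    intro i
    have hy : mk (X i) ∈ P :=
      Ideal.mem_map_of_mem _ (Ideal.subset_span ⟨i, rfl⟩)
    have hw2 := w.2 (mk (X i)) hy
    rw [← hg, ← map_mul, Ideal.Quotient.eq_zero_iff_mem] at hw2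
    rwa [mul_comm] at hw2
  set c : k := coeff 0 (apolar g f) with hc
  have hgC : apolar g f = C c := perp_socle_const hfhom hXg
  refine ⟨c / c0, ?_⟩
  apply Subtype.ext
  show (c / c0) • mk g₀ = (w : MvPolynomial (Fin n) k ⧸ I)
  rw [← hg, ← mk_smul, Ideal.Quotient.mk_eq_mk_iff_sub_mem]
  show apolar ((c / c0) • g₀ - g) f = 0
  rw [apolar_sub_left, apolar_smul_left, hg₀C, hgC, MvPolynomial.smul_eq_C_mul,
    ← C_mul, div_mul_cancel₀ c hc0ne, sub_self]

end Socle

end MacaulayAux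

/-- Macaulay's theorem, forward direction: for every nonzero homogeneous `f` of degree
`ν`, the set `f^⊥ = {g : g ∘ f = 0}` is a homogeneous ideal of `S` and `S/f^⊥` is a
Gorenstein Artin algebra of socle degree `ν`. -/
theorem stmt9 {k : Type*} [Field k] [CharZero k] {n ν : ℕ}
    (f : MvPolynomial (Fin n) k) (hf0 : f ≠ 0) (hfhom : f.IsHomogeneous ν) :
    ∃ I : Ideal (MvPolynomial (Fin n) k),
      (I : Set (MvPolynomial (Fin n) k)) = {g | apolar g f = 0} ∧
      (∀ g ∈ I, ∀ j : ℕ, homogeneousComponent j g ∈ I) ∧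
      Module.Finite k (MvPolynomial (Fin n) k ⧸ I) ∧
      (∃ p : MvPolynomial (Fin n) k, p.IsHomogeneous ν ∧ p ∉ I) ∧
      (∀ p : MvPolynomial (Fin n) k, ∀ j : ℕ, ν < j → p.IsHomogeneous j → p ∈ I) ∧
      Module.finrank k
        (socle k (Ideal.map (Ideal.Quotient.mk I)
          (Ideal.span (Set.range (X : Fin n → MvPolynomial (Fin n) k))))) = 1 := by
  refine ⟨MacaulayAux.perp f, rfl, MacaulayAux.perp_homogeneous hfhom,
    MacaulayAux.perp_finite hfhom, ?_, MacaulayAux.perp_gt hfhom,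
    MacaulayAux.perp_socle hf0 hfhom⟩
  obtain ⟨m₀, hm₀⟩ : f.support.Nonempty := MvPolynomial.support_nonempty.mpr hf0
  refine ⟨monomial m₀ 1,
    isHomogeneous_monomial 1 (MacaulayAux.degree_of_mem_support hfhom hm₀), ?_⟩
  intro hc
  have hne := MacaulayAux.apolar_monomial_one_ne_zero hfhom hm₀
  rw [(MacaulayAux.mem_perp f).mp hc, coeff_zero] at hne
  exact hne rfl
end

section
/- (Macaulay's theorem, converse direction) For every homogeneous ideal I ⊆ S such that S/I is a Gorenstein Artin k-algebra of socle degree ν (i.e., S/I is finite-dimensional over k with (S/I)_ν ≠ 0, (S/I)_j = 0 for j > ν, and 1-dimensional socle), there exists a nonzero homogeneous polynomial f ∈ D of degree ν such that I = f^⊥. -/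
open MvPolynomial

namespace MacAux

variable {k : Type*} [CommRing k] {n : ℕ}

/-- product of descending factorials -/
def D (m m' : Fin n →₀ ℕ) : ℕ := ∏ i, (m' i).descFactorial (m i)

lemma pderiv_pow_monomial (i : Fin n) (a : ℕ) (m' : Fin n →₀ ℕ) (c : k) :
    (((MvPolynomial.pderiv i).toLinearMap : Module.End k (MvPolynomial (Fin n) k)) ^ a)
        (monomial m' c)
      = monomial (m' - Finsupp.single i a) (c * ((m' i).descFactorial a : k)) := by
  induction a with
  | zero => simp
  | succ a ih =>
      rw [pow_succ', Module.End.mul_apply, ih]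
      have h1 : (pderiv i) ((monomial (m' - Finsupp.single i a))
          (c * ((m' i).descFactorial a : k)))
          = monomial (m' - Finsupp.single i a - Finsupp.single i 1)
            (c * ((m' i).descFactorial a : k) * ((m' - Finsupp.single i a) i)) :=
        pderiv_monomial
      erw [h1]
      congr 1
      · rw [tsub_tsub, ← Finsupp.single_add]
      · rw [Finsupp.tsub_apply, Finsupp.single_eq_same, Nat.descFactorial_succ,
          Nat.cast_mul, mul_assoc, mul_comm ((m' i - a : ℕ) : k)]


lemma list_prod_monomial (m : Fin n →₀ ℕ) (l : List (Fin n)) (hl : l.Nodup)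
    (m' : Fin n →₀ ℕ) (c : k) :
    ((l.map fun i => ((MvPolynomial.pderiv i).toLinearMap :
        Module.End k (MvPolynomial (Fin n) k)) ^ (m i)).prod) (monomial m' c)
      = monomial (m' - (l.map fun i => Finsupp.single i (m i)).sum)
          (c * (l.map fun i => ((m' i).descFactorial (m i) : k)).prod) := by
  induction l with
  | nil => simp
  | cons i t ih =>
      have hnd := List.nodup_cons.mp hl
      rw [List.map_cons, List.prod_cons, Module.End.mul_apply, ih hnd.2,
        pderiv_pow_monomial]
      have hsum : ((t.map fun i => Finsupp.single i (m i)).sum) i = 0 := by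
        rw [← Finsupp.applyAddHom_apply, map_list_sum]
        apply List.sum_eq_zero
        intro x hx
        rw [List.map_map] at hx
        obtain ⟨j, hj, rfl⟩ := List.mem_map.mp hx
        simp only [Function.comp_apply, Finsupp.applyAddHom_apply]
        exact Finsupp.single_eq_of_ne (fun h => hnd.1 (h ▸ hj))
      have hexp : (m' - (t.map fun i => Finsupp.single i (m i)).sum) i = m' i := by
        rw [Finsupp.tsub_apply, hsum, Nat.sub_zero]
      rw [hexp, List.map_cons, List.sum_cons, List.map_cons, List.prod_cons,
        tsub_tsub, add_comm (Finsupp.single i (m i))]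
      ring_nf

lemma monDiff_monomial (m m' : Fin n →₀ ℕ) (c : k) :
    monDiff k m (monomial m' c) = monomial (m' - m) (c * (D m m' : ℕ)) := by
  rw [monDiff, List.ofFn_eq_map, list_prod_monomial m _ (List.nodup_finRange n)]
  congr 1
  · congr 1
    rw [← List.ofFn_eq_map, List.sum_ofFn, Finsupp.univ_sum_single]
  · rw [D, Nat.cast_prod, ← List.ofFn_eq_map, List.prod_ofFn]


lemma D_eq_zero {m m' : Fin n →₀ ℕ} (h : ¬ m ≤ m') : D m m' = 0 := by
  rw [Finsupp.le_def] at h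
  push_neg at h
  obtain ⟨i, hi⟩ := h
  exact Finset.prod_eq_zero (Finset.mem_univ i)
    (Nat.descFactorial_eq_zero_iff_lt.mpr hi)

lemma D_self (m : Fin n →₀ ℕ) : D m m = ∏ i, (m i).factorial := by
  simp [D, Nat.descFactorial_self]

lemma descFactorial_add_eq (nn a b : ℕ) :
    nn.descFactorial (a + b) = nn.descFactorial b * (nn - b).descFactorial a := by
  induction a with
  | zero => simp
  | succ a ih =>
      have : a + 1 + b = (a + b) + 1 := by omega
      rw [this, Nat.descFactorial_succ, ih, Nat.descFactorial_succ]
      have : nn - (a + b) = nn - b - a := by omega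
      rw [this]
      ring

lemma coeff_monDiff (m : Fin n →₀ ℕ) (f : MvPolynomial (Fin n) k) (u : Fin n →₀ ℕ) :
    coeff u (monDiff k m f) = (D m (u + m) : k) * coeff (u + m) f := by
  induction f using MvPolynomial.induction_on' with
  | add p q hp hq => rw [map_add, coeff_add, hp, hq, coeff_add, mul_add]
  | monomial m' c =>
      rw [monDiff_monomial]
      by_cases h : u + m = m'
      · subst h
        rw [add_tsub_cancel_right, coeff_monomial, if_pos rfl, coeff_monomial, if_pos rfl]
        ring
      · rw [coeff_monomial, coeff_monomial,
          if_neg (fun hh : m' = u + m => h hh.symm), mul_zero]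
        split_ifs with h2
        · by_cases h3 : m ≤ m'
          · exact absurd (h2 ▸ (tsub_add_cancel_of_le h3)) h
          · rw [D_eq_zero h3, Nat.cast_zero, mul_zero]
        · rfl

lemma monDiff_add_exp (m m' : Fin n →₀ ℕ) (f : MvPolynomial (Fin n) k) :
    monDiff k (m + m') f = monDiff k m (monDiff k m' f) := by
  ext u
  rw [coeff_monDiff, coeff_monDiff, coeff_monDiff, ← mul_assoc]
  congr 1
  · rw [← Nat.cast_mul]
    congr 1
    rw [D, D, D, ← Finset.prod_mul_distrib]
    apply Finset.prod_congr rfl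
    intro i _
    simp only [Finsupp.add_apply]
    rw [← Nat.add_assoc, descFactorial_add_eq (u i + m i + m' i) (m i) (m' i),
      Nat.add_sub_cancel, mul_comm]
  · rw [add_assoc, add_comm m m']


lemma apolar_monomial (m : Fin n →₀ ℕ) (c : k) (f : MvPolynomial (Fin n) k) :
    apolar (monomial m c) f = c • monDiff k m f := by
  classical
  by_cases hc : c = 0
  · subst hc
    simp [apolar, support_monomial]
  · rw [apolar]
    rw [support_monomial, if_neg hc, Finset.sum_singleton, coeff_monomial, if_pos rfl]

lemma apolar_zero_left (f : MvPolynomial (Fin n) k) : apolar 0 f = 0 := by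
  simp [apolar]

lemma apolar_add_left (g g' f : MvPolynomial (Fin n) k) :
    apolar (g + g') f = apolar g f + apolar g' f := by
  classical
  unfold apolar
  have key : ∀ p : MvPolynomial (Fin n) k, ∀ s, p.support ⊆ s →
      ∑ m ∈ p.support, p.coeff m • monDiff k m f = ∑ m ∈ s, p.coeff m • monDiff k m f :=
    fun p s hs => Finset.sum_subset hs (fun m _ hm => by
      rw [mem_support_iff, not_not] at hm; rw [hm, zero_smul])
  rw [key (g + g') (g.support ∪ g'.support) support_add, key g _ Finset.subset_union_left,
    key g' _ Finset.subset_union_right, ← Finset.sum_add_distrib]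
  simp only [coeff_add, add_smul]

lemma coeff_apolar (g f : MvPolynomial (Fin n) k) (u : Fin n →₀ ℕ) :
    coeff u (apolar g f)
      = ∑ m ∈ g.support, coeff m g * ((D m (u + m) : k) * coeff (u + m) f) := by
  rw [apolar, coeff_sum]
  apply Finset.sum_congr rfl
  intro m _
  rw [coeff_smul, coeff_monDiff, smul_eq_mul]

lemma apolar_monomial_mul (m : Fin n →₀ ℕ) (c : k) (h f : MvPolynomial (Fin n) k) :
    apolar (monomial m c * h) f = apolar (monomial m c) (apolar h f) := by
  induction h using MvPolynomial.induction_on' with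
  | add p q hp hq =>
      rw [mul_add, apolar_add_left, hp, hq, apolar_add_left, apolar_monomial,
        apolar_monomial, apolar_monomial, map_add, smul_add]
  | monomial m' c' =>
      rw [monomial_mul, apolar_monomial, apolar_monomial, apolar_monomial, map_smul,
        monDiff_add_exp, smul_smul]

lemma apolar_mul (g h f : MvPolynomial (Fin n) k) :
    apolar (g * h) f = apolar g (apolar h f) := by
  induction g using MvPolynomial.induction_on' with
  | add p q hp hq => rw [add_mul, apolar_add_left, hp, hq, apolar_add_left]
  | monomial m c => exact apolar_monomial_mul m c h f


lemma degree_add (a b : Fin n →₀ ℕ) : (a + b).degree = a.degree + b.degree := by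
  rw [Finsupp.degree_eq_weight_one, map_add]

lemma isHom_degree {g : MvPolynomial (Fin n) k} {j : ℕ} (hg : g.IsHomogeneous j)
    {m : Fin n →₀ ℕ} (hm : coeff m g ≠ 0) : m.degree = j := by
  rw [Finsupp.degree_eq_weight_one]
  exact hg hm

lemma isHom_of {g : MvPolynomial (Fin n) k} {j : ℕ}
    (h : ∀ m : Fin n →₀ ℕ, coeff m g ≠ 0 → m.degree = j) : g.IsHomogeneous j := by
  intro m hm
  have h' := h m hm
  rw [Finsupp.degree_eq_weight_one] at h'
  exact h'

lemma isHom_zero_eq_C {g : MvPolynomial (Fin n) k} (h : g.IsHomogeneous 0) :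
    g = C (coeff 0 g) := by
  ext u
  rw [coeff_C]
  split_ifs with hu
  · rw [← hu]
  · by_contra hc
    exact hu ((Finsupp.degree_eq_zero_iff u).mp (isHom_degree h hc)).symm

lemma apolar_isHom {g f : MvPolynomial (Fin n) k} {j d : ℕ}
    (hg : g.IsHomogeneous j) (hf : f.IsHomogeneous d) :
    (apolar g f).IsHomogeneous (d - j) := by
  apply isHom_of
  intro u hu
  rw [coeff_apolar] at hu
  obtain ⟨m, hm, hne⟩ := Finset.exists_ne_zero_of_sum_ne_zero hu
  have h1 : coeff m g ≠ 0 := fun h => hne (by rw [h, zero_mul])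
  have h2 : coeff (u + m) f ≠ 0 := fun h => hne (by rw [h, mul_zero, mul_zero])
  have hd := isHom_degree hf h2
  rw [degree_add, isHom_degree hg h1] at hd
  omega

lemma apolar_eq_zero_of_gt {g f : MvPolynomial (Fin n) k} {j d : ℕ}
    (hg : g.IsHomogeneous j) (hf : f.IsHomogeneous d) (hgt : d < j) :
    apolar g f = 0 := by
  ext u
  rw [coeff_apolar, coeff_zero]
  apply Finset.sum_eq_zero
  intro m hm
  rcases eq_or_ne (coeff m g) 0 with h | h
  · rw [h, zero_mul]
  · have : coeff (u + m) f = 0 := by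
      by_contra hc
      have hd := isHom_degree hf hc
      rw [degree_add, isHom_degree hg h] at hd
      omega
    rw [this, mul_zero, mul_zero]


lemma apolar_zero_right (g : MvPolynomial (Fin n) k) : apolar g 0 = 0 := by
  simp [apolar]

lemma apolar_sum_left {α : Type*} (s : Finset α) (G : α → MvPolynomial (Fin n) k)
    (f : MvPolynomial (Fin n) k) :
    apolar (∑ x ∈ s, G x) f = ∑ x ∈ s, apolar (G x) f := by
  classical
  induction s using Finset.induction_on with
  | empty => simp [apolar_zero_left]
  | insert x s hx ih =>
      rw [Finset.sum_insert hx, Finset.sum_insert hx, apolar_add_left, ih]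

lemma coeff_zero_apolar_monomial_one [Nontrivial k] (m : Fin n →₀ ℕ)
    (F : MvPolynomial (Fin n) k) :
    coeff 0 (apolar (monomial m (1 : k)) F)
      = ((∏ i, (m i).factorial : ℕ) : k) * coeff m F := by
  classical
  rw [coeff_apolar, support_monomial, if_neg (one_ne_zero (α := k)), Finset.sum_singleton,
    coeff_monomial, if_pos rfl, one_mul, zero_add, ← D_self]

lemma mul_span_mem {I : Ideal (MvPolynomial (Fin n) k)} {ν : ℕ}
    (hIvan : ∀ p : MvPolynomial (Fin n) k, ∀ j : ℕ, ν < j → p.IsHomogeneous j → p ∈ I)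
    {p : MvPolynomial (Fin n) k} (hp : p.IsHomogeneous ν)
    {y : MvPolynomial (Fin n) k}
    (hy : y ∈ Ideal.span (Set.range (X : Fin n → MvPolynomial (Fin n) k))) :
    p * y ∈ I := by
  induction hy using Submodule.span_induction with
  | mem x hx =>
      obtain ⟨i, rfl⟩ := hx
      exact hIvan _ (ν + 1) (Nat.lt_succ_self ν) (hp.mul (isHomogeneous_X k i))
  | zero => rw [mul_zero]; exact I.zero_mem
  | add x y hx hy ihx ihy => rw [mul_add]; exact I.add_mem ihx ihy
  | smul a x hx ih =>
      rw [smul_eq_mul, mul_comm a x, ← mul_assoc]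
      exact I.mul_mem_right a ih

end MacAux

open MacAux

/-- Macaulay's theorem, converse direction: for every homogeneous ideal `I` such that
`S/I` is a Gorenstein Artin algebra of socle degree `ν`, there is a nonzero homogeneous
`f` of degree `ν` with `I = f^⊥`. -/
theorem stmt10 {k : Type*} [Field k] [CharZero k] {n ν : ℕ}
    (I : Ideal (MvPolynomial (Fin n) k))
    (hIhom : ∀ g ∈ I, ∀ j : ℕ, homogeneousComponent j g ∈ I)
    (hIfin : Module.Finite k (MvPolynomial (Fin n) k ⧸ I))
    (hIν : ∃ p : MvPolynomial (Fin n) k, p.IsHomogeneous ν ∧ p ∉ I)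
    (hIvan : ∀ p : MvPolynomial (Fin n) k, ∀ j : ℕ, ν < j → p.IsHomogeneous j → p ∈ I)
    (hIsoc : Module.finrank k
      (socle k (Ideal.map (Ideal.Quotient.mk I)
        (Ideal.span (Set.range (X : Fin n → MvPolynomial (Fin n) k))))) = 1) :
    ∃ f : MvPolynomial (Fin n) k, f ≠ 0 ∧ f.IsHomogeneous ν ∧
      ∀ g : MvPolynomial (Fin n) k, g ∈ I ↔ apolar g f = 0 := by
  classical
  obtain ⟨p₀, hp₀hom, hp₀⟩ := hIν
  let M := MvPolynomial (Fin n) k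
  set P : Ideal (MvPolynomial (Fin n) k ⧸ I) := Ideal.map (Ideal.Quotient.mk I)
    (Ideal.span (Set.range (X : Fin n → MvPolynomial (Fin n) k))) with hP
  have hA : Module.Finite k (M ⧸ I) := hIfin
  -- socle membership for images of elements multiplying span(X) into I
  have hsoc_mem : ∀ p : M, (∀ y ∈ Ideal.span (Set.range (X : Fin n → M)), p * y ∈ I) →
      Ideal.Quotient.mk I p ∈ socle k P := by
    intro p hmul y hy
    rw [hP, Ideal.mem_map_iff_of_surjective _ Ideal.Quotient.mk_surjective] at hy
    obtain ⟨y', hy', rfl⟩ := hy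
    rw [← map_mul, Ideal.Quotient.eq_zero_iff_mem]
    exact hmul y' hy'
  have hsoc_hom : ∀ p : M, p.IsHomogeneous ν → Ideal.Quotient.mk I p ∈ socle k P :=
    fun p hp => hsoc_mem p (fun y hy => mul_span_mem hIvan hp hy)
  have he0 : Ideal.Quotient.mk I p₀ ≠ 0 := by
    rw [Ne, Ideal.Quotient.eq_zero_iff_mem]; exact hp₀
  set e : socle k P := ⟨Ideal.Quotient.mk I p₀, hsoc_hom p₀ hp₀hom⟩ with hedef
  have he : e ≠ 0 := by
    simp only [Ne, Submodule.mk_eq_zero, hedef]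
    exact he0
  have hspan := (finrank_eq_one_iff_of_nonzero' e he).mp hIsoc
  -- a linear functional not vanishing on the socle generator
  have hlam : ¬ ∀ φ : Module.Dual k (M ⧸ I), φ (Ideal.Quotient.mk I p₀) = 0 := by
    rw [Module.forall_dual_apply_eq_zero_iff]
    exact he0
  obtain ⟨lam, hlam0⟩ := not_forall.mp hlam
  set Λ : M →ₗ[k] k := lam.comp (Ideal.Quotient.mkₐ k I).toLinearMap with hΛdef
  have hΛ : ∀ p : M, Λ p = lam (Ideal.Quotient.mk I p) := by
    intro p
    simp [hΛdef, Ideal.Quotient.mkₐ_eq_mk]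
  have hΛI : ∀ p ∈ I, Λ p = 0 := by
    intro p hp
    rw [hΛ, Ideal.Quotient.eq_zero_iff_mem.mpr hp, map_zero]
  -- Λ does not vanish on homogeneous degree-ν elements outside I
  have hΛν : ∀ p : M, p.IsHomogeneous ν → p ∉ I → Λ p ≠ 0 := by
    intro p hphom hpI
    obtain ⟨c, hc⟩ := hspan ⟨Ideal.Quotient.mk I p, hsoc_hom p hphom⟩
    have hc' : c • Ideal.Quotient.mk I p₀ = Ideal.Quotient.mk I p := congrArg Subtype.val hc
    have hcne : c ≠ 0 := by
      intro h
      rw [h, zero_smul] at hc'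
      exact hpI (Ideal.Quotient.eq_zero_iff_mem.mp hc'.symm)
    rw [hΛ, ← hc', map_smul, smul_eq_mul]
    exact mul_ne_zero hcne hlam0
  -- the finite set of exponents of degree ν
  set T : Finset (Fin n →₀ ℕ) :=
    (Finset.univ.image (fun v : Fin n → Fin (ν + 1) =>
      Finsupp.equivFunOnFinite.symm fun i => (v i : ℕ))).filter
      (fun m => m.degree = ν) with hT
  have hTmem : ∀ m : Fin n →₀ ℕ, m ∈ T ↔ m.degree = ν := by
    intro m
    rw [hT, Finset.mem_filter]
    constructor
    · exact fun h => h.2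
    · intro h
      refine ⟨Finset.mem_image.mpr ⟨fun i => ⟨m i, ?_⟩, Finset.mem_univ _, ?_⟩, h⟩
      · exact Nat.lt_succ_of_le (h ▸ Finsupp.le_degree i m)
      · simp [Finsupp.equivFunOnFinite_symm_coe]
  set Mf : (Fin n →₀ ℕ) → ℕ := fun m => ∏ i, (m i).factorial with hMf
  have hMfne : ∀ m, (Mf m : k) ≠ 0 := by
    intro m
    rw [hMf]
    have : 0 < ∏ i, (m i).factorial := Finset.prod_pos fun i _ => (m i).factorial_pos
    exact Nat.cast_ne_zero.mpr (Nat.pos_iff_ne_zero.mp this)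
  -- the apolar dual polynomial
  set f : MvPolynomial (Fin n) k :=
    ∑ m ∈ T, monomial m ((Mf m : k)⁻¹ * Λ (monomial m 1)) with hf
  have hcoeff_f : ∀ m : Fin n →₀ ℕ,
      coeff m f = if m ∈ T then (Mf m : k)⁻¹ * Λ (monomial m 1) else 0 := by
    intro m
    rw [hf, coeff_sum]
    rw [Finset.sum_congr rfl (fun m' _ => coeff_monomial m m' _), Finset.sum_ite_eq' T m _]
  have hfhom : f.IsHomogeneous ν := by
    apply isHom_of
    intro m hm
    rw [hcoeff_f] at hm
    by_cases h : m ∈ T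
    · exact (hTmem m).mp h
    · rw [if_neg h] at hm; exact absurd rfl hm
  -- pairing formula in top degree
  have hpair : ∀ g : MvPolynomial (Fin n) k, g.IsHomogeneous ν → apolar g f = C (Λ g) := by
    intro g hg
    have h0 : apolar g f = C (coeff 0 (apolar g f)) := by
      apply isHom_zero_eq_C
      have := apolar_isHom hg hfhom
      simpa using this
    rw [h0]
    congr 1
    rw [coeff_apolar]
    have : ∀ m ∈ g.support, coeff m g * ((D m (0 + m) : k) * coeff (0 + m) f)
        = Λ (monomial m (coeff m g)) := by
      intro m hm
      have hmdeg : m.degree = ν := isHom_degree hg (mem_support_iff.mp hm)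
      have hMm : ((∏ i, (m i).factorial : ℕ) : k) = (Mf m : k) := rfl
      rw [zero_add, D_self, hcoeff_f, if_pos ((hTmem m).mpr hmdeg), hMm,
        show monomial m (coeff m g) = (coeff m g) • monomial m (1:k) by
          rw [smul_monomial, smul_eq_mul, mul_one],
        map_smul, smul_eq_mul]
      field_simp
      rw [mul_assoc, mul_div_assoc, mul_div_cancel_left₀ _ (hMfne m)]
    rw [Finset.sum_congr rfl this, ← map_sum, ← as_sum g]
  have hf0 : f ≠ 0 := by
    intro h
    have : apolar p₀ f = C (Λ p₀) := hpair p₀ hp₀hom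
    rw [h, apolar_zero_right] at this
    have : Λ p₀ = 0 := by
      have := congrArg (coeff 0) this
      rwa [coeff_zero, coeff_zero_C, eq_comm] at this
    exact hΛν p₀ hp₀hom hp₀ this
  -- multiplying up to the socle degree
  have step6 : ∀ d : ℕ, ∀ j : ℕ, j ≤ ν → ν - j = d →
      ∀ p : MvPolynomial (Fin n) k, p.IsHomogeneous j → p ∉ I →
      ∃ h : MvPolynomial (Fin n) k, h.IsHomogeneous (ν - j) ∧ h * p ∉ I := by
    intro d
    induction d with
    | zero =>
        intro j hj hd p hphom hpI
        have hjν : j = ν := by omega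
        subst hjν
        refine ⟨1, by simpa using isHomogeneous_one (Fin n) k, by rwa [one_mul]⟩
    | succ d ih =>
        intro j hj hd p hphom hpI
        have hjlt : j < ν := by omega
        -- there is a variable multiplying p outside of I
        have hXi : ∃ i : Fin n, X i * p ∉ I := by
          by_contra hall
          push_neg at hall
          have hmul : ∀ y ∈ Ideal.span (Set.range (X : Fin n → MvPolynomial (Fin n) k)),
              p * y ∈ I := by
            intro y hy
            induction hy using Submodule.span_induction with
            | mem x hx =>
                obtain ⟨i, rfl⟩ := hx
                rw [mul_comm]
                exact hall i
            | zero => rw [mul_zero]; exact I.zero_mem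
            | add x y hx hy ihx ihy => rw [mul_add]; exact I.add_mem ihx ihy
            | smul a x hx ihx =>
                rw [smul_eq_mul, mul_comm a x, ← mul_assoc]
                exact I.mul_mem_right a ihx
          obtain ⟨c, hc⟩ := hspan ⟨Ideal.Quotient.mk I p, hsoc_mem p hmul⟩
          have hc' : c • Ideal.Quotient.mk I p₀ = Ideal.Quotient.mk I p :=
            congrArg Subtype.val hc
          have hd2 : p - c • p₀ ∈ I := by
            have h9 : (Ideal.Quotient.mkₐ k I) (p - c • p₀) = 0 := by
              rw [map_sub, map_smul, Ideal.Quotient.mkₐ_eq_mk, sub_eq_zero]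
              exact hc'.symm
            rwa [Ideal.Quotient.mkₐ_eq_mk, Ideal.Quotient.eq_zero_iff_mem] at h9
          have := hIhom _ hd2 j
          rw [map_sub, map_smul,
            homogeneousComponent_of_mem ((mem_homogeneousSubmodule j p).mpr hphom),
            if_pos rfl,
            homogeneousComponent_of_mem ((mem_homogeneousSubmodule ν p₀).mpr hp₀hom),
            if_neg (by omega : j ≠ ν), smul_zero, sub_zero] at this
          exact hpI this
        obtain ⟨i, hXiI⟩ := hXi
        obtain ⟨h', hh'hom, hh'⟩ := ih (j + 1) (by omega) (by omega) (X i * p)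
          (by have h8 := (isHomogeneous_X k i).mul hphom
              rwa [Nat.add_comm] at h8) hXiI
        refine ⟨h' * X i, ?_, by rwa [mul_assoc]⟩
        have := hh'hom.mul (isHomogeneous_X k i)
        have harith : ν - (j + 1) + 1 = ν - j := by omega
        rwa [harith] at this
  -- vanishing of apolar for homogeneous elements of I
  have hfor : ∀ j : ℕ, j ≤ ν → ∀ p : MvPolynomial (Fin n) k,
      p.IsHomogeneous j → p ∈ I → apolar p f = 0 := by
    intro j hj p hphom hpI
    have hF : (apolar p f).IsHomogeneous (ν - j) := apolar_isHom hphom hfhom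
    ext u
    rw [coeff_zero]
    by_cases hu : u.degree = ν - j
    · have h1 : coeff 0 (apolar (monomial u (1 : k)) (apolar p f))
          = ((∏ i, (u i).factorial : ℕ) : k) * coeff u (apolar p f) :=
        coeff_zero_apolar_monomial_one u (apolar p f)
      have hhom3 : (monomial u (1 : k) * p).IsHomogeneous ν := by
        have h4 := (isHomogeneous_monomial (1 : k) hu).mul hphom
        rwa [show ν - j + j = ν by omega] at h4
      rw [← apolar_mul, hpair _ hhom3, hΛI _ (I.mul_mem_left _ hpI), map_zero,
        coeff_zero, eq_comm, mul_eq_zero] at h1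
      rcases h1 with h1 | h1
      · exact absurd h1 (hMfne u)
      · exact h1
    · by_contra hc
      exact hu (isHom_degree hF hc)
  refine ⟨f, hf0, hfhom, fun g => ⟨?_, ?_⟩⟩
  · -- g ∈ I → apolar g f = 0
    intro hg
    rw [← sum_homogeneousComponent g, apolar_sum_left]
    apply Finset.sum_eq_zero
    intro j _
    by_cases hj : j ≤ ν
    · exact hfor j hj _ (homogeneousComponent_isHomogeneous j g) (hIhom g hg j)
    · exact apolar_eq_zero_of_gt (homogeneousComponent_isHomogeneous j g) hfhom (by omega)
  · -- apolar g f = 0 → g ∈ I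
    intro h0
    have hFj : ∀ j : ℕ, j ≤ ν → apolar (homogeneousComponent j g) f = 0 := by
      intro j hj
      by_cases hjr : j ∈ Finset.range (g.totalDegree + 1)
      · have hsum : ∑ i ∈ Finset.range (g.totalDegree + 1),
            apolar (homogeneousComponent i g) f = 0 := by
          rw [← apolar_sum_left, sum_homogeneousComponent, h0]
        have h5 := congrArg (homogeneousComponent (ν - j)) hsum
        rw [map_sum, map_zero] at h5
        have h6 : ∀ i ∈ Finset.range (g.totalDegree + 1),
            homogeneousComponent (ν - j) (apolar (homogeneousComponent i g) f)
              = if i = j then apolar (homogeneousComponent j g) f else 0 := by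
          intro i _
          by_cases hi : i ≤ ν
          · rw [homogeneousComponent_of_mem ((mem_homogeneousSubmodule _ _).mpr
              (apolar_isHom (homogeneousComponent_isHomogeneous i g) hfhom))]
            by_cases hij : i = j
            · subst hij
              rw [if_pos rfl, if_pos rfl]
            · rw [if_neg (by omega : ¬ ν - j = ν - i), if_neg hij]
          · rw [apolar_eq_zero_of_gt (homogeneousComponent_isHomogeneous i g) hfhom
              (by omega), map_zero, if_neg (by omega : ¬ i = j)]
        rw [Finset.sum_congr rfl h6, Finset.sum_ite_eq' _ j _, if_pos hjr] at h5
        exact h5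
      · have : homogeneousComponent j g = 0 := by
          apply homogeneousComponent_eq_zero
          simp only [Finset.mem_range, not_lt] at hjr
          omega
        rw [this, apolar_zero_left]
    have hcomp : ∀ j : ℕ, homogeneousComponent j g ∈ I := by
      intro j
      by_cases hjv : ν < j
      · exact hIvan _ j hjv (homogeneousComponent_isHomogeneous j g)
      · push_neg at hjv
        by_contra hnot
        obtain ⟨h, hhhom, hh⟩ := step6 (ν - j) j hjv rfl _
          (homogeneousComponent_isHomogeneous j g) hnot
        have hhom2 : (h * homogeneousComponent j g).IsHomogeneous ν := by
          have h7 := hhhom.mul (homogeneousComponent_isHomogeneous j g)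
          rwa [show ν - j + j = ν by omega] at h7
        apply hΛν _ hhom2 hh
        have h8 : C (Λ (h * homogeneousComponent j g)) = (0 : MvPolynomial (Fin n) k) := by
          rw [← hpair _ hhom2, apolar_mul, hFj j hjv, apolar_zero_right]
        have := congrArg (coeff 0) h8
        rwa [coeff_zero_C, coeff_zero] at this
    have hsum2 := Ideal.sum_mem I (fun j (_ : j ∈ Finset.range (g.totalDegree + 1)) => hcomp j)
    rwa [sum_homogeneousComponent] at hsum2
end

section
/- (Macaulay's theorem, uniqueness) For two nonzero homogeneous polynomials f_1, f_2 ∈ D of the same degree ν, one has f_1^⊥ = f_2^⊥ if and only if f_2 = c·f_1 for some nonzero scalar c ∈ k. -/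
open MvPolynomial

lemma nat_descFactorial_succ' (a t : ℕ) :
    a.descFactorial (t + 1) = a * (a - 1).descFactorial t := by
  cases a with
  | zero => simp
  | succ a => rw [Nat.succ_descFactorial_succ]; simp

lemma pderiv_pow_monomial {k : Type*} [CommRing k] {n : ℕ} (i : Fin n) (t : ℕ)
    (s : Fin n →₀ ℕ) (c : k) :
    ((((MvPolynomial.pderiv i).toLinearMap :
        Module.End k (MvPolynomial (Fin n) k)) ^ t)) (monomial s c)
      = monomial (s - Finsupp.single i t) (((s i).descFactorial t : k) * c) := by
  induction t generalizing s c with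
  | zero => simp
  | succ t ih =>
    rw [pow_succ, Module.End.mul_apply]
    have h1 : (((MvPolynomial.pderiv i).toLinearMap :
        Module.End k (MvPolynomial (Fin n) k))) (monomial s c)
        = monomial (s - Finsupp.single i 1) (c * s i) := MvPolynomial.pderiv_monomial
    rw [h1, ih]
    have h2 : ((s - Finsupp.single i 1 : Fin n →₀ ℕ)) i = s i - 1 := by
      rw [Finsupp.tsub_apply, Finsupp.single_eq_same]
    have h3 : s - Finsupp.single i 1 - Finsupp.single i t = s - Finsupp.single i (t + 1) := by
      rw [tsub_tsub, ← Finsupp.single_add, add_comm 1 t]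
    rw [h2, h3, nat_descFactorial_succ']
    push_cast
    ring_nf

lemma list_prod_pderiv_monomial {k : Type*} [CommRing k] {n : ℕ} (m : Fin n →₀ ℕ)
    (s : Fin n →₀ ℕ) (c : k) :
    ∀ l : List (Fin n), l.Nodup →
      ((l.map fun i => ((MvPolynomial.pderiv i).toLinearMap :
          Module.End k (MvPolynomial (Fin n) k)) ^ m i).prod) (monomial s c)
        = monomial (s - ∑ i ∈ l.toFinset, Finsupp.single i (m i))
            (((∏ i ∈ l.toFinset, (s i).descFactorial (m i) : ℕ) : k) * c) := by
  intro l hl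
  induction l with
  | nil => simp
  | cons i l ih =>
    obtain ⟨hi, hl'⟩ := List.nodup_cons.mp hl
    have hit : i ∉ l.toFinset := by simpa using hi
    rw [List.map_cons, List.prod_cons, Module.End.mul_apply, ih hl']
    rw [pderiv_pow_monomial]
    have h2 : (s - ∑ j ∈ l.toFinset, Finsupp.single j (m j)) i = s i := by
      rw [Finsupp.tsub_apply]
      have : (∑ j ∈ l.toFinset, Finsupp.single j (m j)) i = 0 := by
        rw [Finsupp.finset_sum_apply]
        exact Finset.sum_eq_zero fun j hj => by
          rw [Finsupp.single_apply, if_neg (by rintro rfl; exact hit hj)]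
      rw [this, Nat.sub_zero]
    have h3 : s - ∑ j ∈ l.toFinset, Finsupp.single j (m j) - Finsupp.single i (m i)
        = s - ∑ j ∈ (i :: l).toFinset, Finsupp.single j (m j) := by
      rw [tsub_tsub, List.toFinset_cons, Finset.sum_insert hit, add_comm]
    rw [h2, h3, List.toFinset_cons, Finset.prod_insert hit]
    push_cast
    ring_nf

lemma monDiff_monomial {k : Type*} [CommRing k] {n : ℕ} (m s : Fin n →₀ ℕ) (c : k) :
    monDiff k m (monomial s c)
      = monomial (s - m) (((∏ i : Fin n, (s i).descFactorial (m i) : ℕ) : k) * c) := by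
  have := list_prod_pderiv_monomial m s c (List.finRange n) (List.nodup_finRange n)
  rw [monDiff, List.ofFn_eq_map]
  rw [this]
  have huniv : (List.finRange n).toFinset = Finset.univ := by
    ext x; simp [List.mem_finRange]
  rw [huniv, Finsupp.univ_sum_single]

lemma finsupp_degree_eq_sum {n : ℕ} (d : Fin n →₀ ℕ) : d.degree = ∑ i : Fin n, d i :=
  Finset.sum_subset (Finset.subset_univ _)
    (fun i _ hi => Finsupp.notMem_support_iff.mp hi)

lemma monDiff_homog {k : Type*} [Field k] [CharZero k] {n ν : ℕ}
    (f : MvPolynomial (Fin n) k) (hf : f.IsHomogeneous ν)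
    (m : Fin n →₀ ℕ) (hm : m.degree = ν) :
    monDiff k m f = C (((∏ i : Fin n, (m i).factorial : ℕ) : k) * f.coeff m) := by
  conv_lhs => rw [← MvPolynomial.support_sum_monomial_coeff f]
  rw [map_sum]
  have := Finset.sum_eq_single (s := f.support)
    (f := fun s => monDiff k m (monomial s (f.coeff s))) m
    (fun b hb hbm => by
      show monDiff k m (monomial b (f.coeff b)) = 0
      rw [monDiff_monomial]
      have hbdeg : b.degree = ν := by
        by_contra h
        exact MvPolynomial.mem_support_iff.mp hb (hf.coeff_eq_zero h)
      have : ∃ i, b i < m i := by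
        by_contra h
        push_neg at h
        have hsum : ∑ i : Fin n, m i = ∑ i : Fin n, b i := by
          rw [← finsupp_degree_eq_sum, ← finsupp_degree_eq_sum, hbdeg, hm]
        have := (Finset.sum_eq_sum_iff_of_le (fun i _ => h i)).mp hsum
        exact hbm (Finsupp.ext fun i => ((this i (Finset.mem_univ i)).symm))
      obtain ⟨i, hi⟩ := this
      have : (∏ i : Fin n, (b i).descFactorial (m i)) = 0 :=
        Finset.prod_eq_zero (Finset.mem_univ i) (Nat.descFactorial_eq_zero_iff_lt.mpr hi)
      rw [this]
      simp)
    (fun hm' => by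
      show monDiff k m (monomial m (f.coeff m)) = 0
      rw [MvPolynomial.notMem_support_iff.mp hm']
      simp)
  rw [show (∑ s ∈ f.support, monDiff k m (monomial s (f.coeff s))) = monDiff k m (monomial m (f.coeff m)) from this, monDiff_monomial, tsub_self]
  by_cases hmem : m ∈ f.support
  · have hprod : (∏ i : Fin n, (m i).descFactorial (m i)) = ∏ i : Fin n, (m i).factorial :=
      Finset.prod_congr rfl fun i _ => Nat.descFactorial_self (m i)
    rw [MvPolynomial.monomial_zero', hprod]
  · rw [MvPolynomial.notMem_support_iff.mp hmem]
    simp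

lemma apolar_eq_sum_subset {k : Type*} [CommRing k] {n : ℕ}
    (g f : MvPolynomial (Fin n) k) (A : Finset (Fin n →₀ ℕ)) (hA : g.support ⊆ A) :
    apolar g f = ∑ m ∈ A, g.coeff m • monDiff k m f := by
  rw [apolar]
  exact Finset.sum_subset hA fun x _ hx => by
    rw [MvPolynomial.notMem_support_iff.mp hx, zero_smul]

lemma apolar_monomial_one {k : Type*} [CommRing k] {n : ℕ}
    (m : Fin n →₀ ℕ) (f : MvPolynomial (Fin n) k) :
    apolar (monomial m (1 : k)) f = monDiff k m f := by
  rw [apolar_eq_sum_subset _ f {m} (by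
    classical
    rw [MvPolynomial.support_monomial]
    split <;> simp)]
  simp [MvPolynomial.coeff_monomial]

lemma apolar_pair {k : Type*} [CommRing k] {n : ℕ}
    (m₀ m : Fin n →₀ ℕ) (hne : m₀ ≠ m) (a b : k) (f : MvPolynomial (Fin n) k) :
    apolar (monomial m₀ a + monomial m b) f
      = a • monDiff k m₀ f + b • monDiff k m f := by
  classical
  rw [apolar_eq_sum_subset _ f {m₀, m} ?_]
  · rw [Finset.sum_pair hne]
    have h1 : (monomial m₀ a + monomial m b).coeff m₀ = a := by
      simp [MvPolynomial.coeff_monomial, Ne.symm hne, hne]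
    have h2 : (monomial m₀ a + monomial m b).coeff m = b := by
      simp [MvPolynomial.coeff_monomial, Ne.symm hne, hne]
    rw [h1, h2]
  · refine (MvPolynomial.support_add).trans ?_
    apply Finset.union_subset
    · refine (MvPolynomial.support_monomial_subset).trans ?_
      simp
    · refine (MvPolynomial.support_monomial_subset).trans ?_
      simp

/-- Macaulay's theorem, uniqueness: for nonzero homogeneous `f₁, f₂` of the same degree
`ν`, `f₁^⊥ = f₂^⊥` iff `f₂ = c • f₁` for some nonzero scalar `c`. -/
theorem stmt11 {k : Type*} [Field k] [CharZero k] {n ν : ℕ}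
    (f₁ f₂ : MvPolynomial (Fin n) k) (hf₁ : f₁ ≠ 0) (hf₂ : f₂ ≠ 0)
    (hf₁hom : f₁.IsHomogeneous ν) (hf₂hom : f₂.IsHomogeneous ν) :
    {g : MvPolynomial (Fin n) k | apolar g f₁ = 0} =
        {g : MvPolynomial (Fin n) k | apolar g f₂ = 0} ↔
      ∃ c : k, c ≠ 0 ∧ f₂ = C c * f₁ := by
  have Mne : ∀ m : Fin n →₀ ℕ, ((∏ i : Fin n, (m i).factorial : ℕ) : k) ≠ 0 := fun m =>
    Nat.cast_ne_zero.mpr (Finset.prod_pos (fun i _ => Nat.factorial_pos (m i))).ne'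
  constructor
  · intro h
    rw [Set.ext_iff] at h
    simp only [Set.mem_setOf_eq] at h
    obtain ⟨m₀, hm₀⟩ := MvPolynomial.support_nonempty.mpr hf₁
    have hc₁ : f₁.coeff m₀ ≠ 0 := MvPolynomial.mem_support_iff.mp hm₀
    have hdeg₀ : m₀.degree = ν := by
      by_contra hd
      exact hc₁ (hf₁hom.coeff_eq_zero hd)
    set M₀ : k := ((∏ i : Fin n, (m₀ i).factorial : ℕ) : k) with hM₀def
    have hc₂ : f₂.coeff m₀ ≠ 0 := by
      intro hz
      have h1 : apolar (monomial m₀ (1 : k)) f₂ = 0 := by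
        rw [apolar_monomial_one, monDiff_homog f₂ hf₂hom m₀ hdeg₀, hz, mul_zero, map_zero]
      have h2 := (h (monomial m₀ (1 : k))).mpr h1
      rw [apolar_monomial_one, monDiff_homog f₁ hf₁hom m₀ hdeg₀] at h2
      exact (mul_ne_zero (Mne m₀) hc₁) (by exact_mod_cast MvPolynomial.C_eq_zero.mp h2)
    refine ⟨f₂.coeff m₀ / f₁.coeff m₀, div_ne_zero hc₂ hc₁, ?_⟩
    ext m
    rw [MvPolynomial.coeff_C_mul]
    by_cases hdm : m.degree = ν
    · -- key claim: coeff m f₂ * coeff m₀ f₁ = coeff m₀ f₂ * coeff m f₁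
      have key : f₂.coeff m * f₁.coeff m₀ = f₂.coeff m₀ * f₁.coeff m := by
        by_cases hmm : m = m₀
        · rw [hmm]
        · set Mm : k := ((∏ i : Fin n, (m i).factorial : ℕ) : k) with hMmdef
          set g : MvPolynomial (Fin n) k :=
            monomial m₀ (Mm * f₂.coeff m) + monomial m (-(M₀ * f₂.coeff m₀)) with hg
          have hne : m₀ ≠ m := fun e => hmm e.symm
          have hg₂ : apolar g f₂ = 0 := by
            rw [hg, apolar_pair m₀ m hne, monDiff_homog f₂ hf₂hom m₀ hdeg₀,
              monDiff_homog f₂ hf₂hom m hdm, MvPolynomial.smul_eq_C_mul,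
              MvPolynomial.smul_eq_C_mul, ← map_mul, ← map_mul, ← map_add,
              ← hM₀def, ← hMmdef]
            rw [show Mm * f₂.coeff m * (M₀ * f₂.coeff m₀)
                + -(M₀ * f₂.coeff m₀) * (Mm * f₂.coeff m) = 0 from by ring, map_zero]
          have hg₁ := (h g).mpr hg₂
          rw [hg, apolar_pair m₀ m hne, monDiff_homog f₁ hf₁hom m₀ hdeg₀,
            monDiff_homog f₁ hf₁hom m hdm, MvPolynomial.smul_eq_C_mul,
            MvPolynomial.smul_eq_C_mul, ← map_mul, ← map_mul, ← map_add,
            ← hM₀def, ← hMmdef] at hg₁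
          have h0 : Mm * f₂.coeff m * (M₀ * f₁.coeff m₀)
              + -(M₀ * f₂.coeff m₀) * (Mm * f₁.coeff m) = 0 :=
            MvPolynomial.C_eq_zero.mp hg₁
          have hMM : Mm * M₀ ≠ 0 := mul_ne_zero (Mne m) (Mne m₀)
          have h0' : Mm * M₀ * (f₂.coeff m * f₁.coeff m₀ - f₂.coeff m₀ * f₁.coeff m) = 0 := by
            linear_combination h0
          rcases mul_eq_zero.mp h0' with h | h
          · exact absurd h hMM
          · exact sub_eq_zero.mp h
      field_simp
      linear_combination key
    · rw [hf₁hom.coeff_eq_zero hdm, hf₂hom.coeff_eq_zero hdm, mul_zero]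
  · rintro ⟨c, hc, rfl⟩
    ext g
    simp only [Set.mem_setOf_eq]
    have hlin : apolar g (C c * f₁) = c • apolar g f₁ := by
      rw [apolar, apolar, Finset.smul_sum]
      refine Finset.sum_congr rfl fun m _ => ?_
      rw [← MvPolynomial.smul_eq_C_mul, map_smul, smul_comm]
    rw [hlin, smul_eq_zero]
    constructor
    · intro h0; exact Or.inr h0
    · rintro (h0 | h0)
      · exact absurd h0 hc
      · exact h0
end

section
/- Let I and J be homogeneous ideals in S such that S/I and S/J are both Gorenstein Artin k-algebras of socle degree ν. Then I = J if and only if I_ν = J_ν, i.e., if and only if I and J contain the same homogeneous forms of degree ν. -/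
open MvPolynomial

section Aux

variable {k : Type*} [Field k] {n ν : ℕ}

/-- Climb up: from a homogeneous `p ∉ J`, find `r` so that `p*r ∉ J` is homogeneous and
killed by all variables mod `J`. -/
lemma climb (J : Ideal (MvPolynomial (Fin n) k))
    (hJvan : ∀ p : MvPolynomial (Fin n) k, ∀ j : ℕ, ν < j → p.IsHomogeneous j → p ∈ J) :
    ∀ m : ℕ, ∀ d : ℕ, ∀ p : MvPolynomial (Fin n) k, p.IsHomogeneous d → p ∉ J →
      ν + 1 ≤ d + m →
      ∃ r e, (p * r).IsHomogeneous e ∧ p * r ∉ J ∧ ∀ i, (p * r) * X i ∈ J := by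
  intro m
  induction m with
  | zero =>
    intro d p hp hpJ hle
    exact absurd (hJvan p d (by omega) hp) hpJ
  | succ m ih =>
    intro d p hp hpJ hle
    by_cases hall : ∀ i, p * X i ∈ J
    · exact ⟨1, d, by simpa using hp, by simpa using hpJ, by simpa using hall⟩
    · push_neg at hall
      obtain ⟨i, hi⟩ := hall
      have hpx : (p * X i).IsHomogeneous (d + 1) := hp.mul (isHomogeneous_X _ _)
      obtain ⟨r, e, h1, h2, h3⟩ := ih (d + 1) (p * X i) hpx hi (by omega)
      exact ⟨X i * r, e, by rwa [← mul_assoc], by rwa [← mul_assoc],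
        fun j => by rw [← mul_assoc]; exact h3 j⟩

/-- Main lemma: under the Gorenstein hypotheses on `J` and agreement in degree `ν`,
every homogeneous element of `I` lies in `J`. -/
lemma hom_incl (I J : Ideal (MvPolynomial (Fin n) k))
    (hJhom : ∀ g ∈ J, ∀ j : ℕ, homogeneousComponent j g ∈ J)
    (hJν : ∃ p : MvPolynomial (Fin n) k, p.IsHomogeneous ν ∧ p ∉ J)
    (hJvan : ∀ p : MvPolynomial (Fin n) k, ∀ j : ℕ, ν < j → p.IsHomogeneous j → p ∈ J)
    (hJsoc : Module.finrank k
      (socle k (Ideal.map (Ideal.Quotient.mk J)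
        (Ideal.span (Set.range (X : Fin n → MvPolynomial (Fin n) k))))) = 1)
    (hν : ∀ p : MvPolynomial (Fin n) k, p.IsHomogeneous ν → (p ∈ I ↔ p ∈ J)) :
    ∀ d : ℕ, ∀ p : MvPolynomial (Fin n) k, p.IsHomogeneous d → p ∈ I → p ∈ J := by
  intro d p hp hpI
  by_contra hpJ
  -- find q = p * r, homogeneous of degree e, not in J, killed by variables mod J
  obtain ⟨r, e, hq, hqJ, hqX⟩ := climb J hJvan (ν + 1) d p hp hpJ (by omega)
  set q := p * r with hqdef
  have hqI : q ∈ I := Ideal.mul_mem_right r I hpI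
  have heν : e ≤ ν := by
    by_contra h
    exact hqJ (hJvan q e (by omega) hq)
  rcases eq_or_lt_of_le heν with he | he
  · -- degree ν : contradiction with agreement hypothesis
    exact hqJ ((hν q (he ▸ hq)).1 hqI)
  -- degree e < ν : use the socle
  set mk := Ideal.Quotient.mk J with hmk
  set Soc := socle k (Ideal.map mk
    (Ideal.span (Set.range (X : Fin n → MvPolynomial (Fin n) k)))) with hSoc
  have soc_of : ∀ a : MvPolynomial (Fin n) k, (∀ i, a * X i ∈ J) → mk a ∈ Soc := by
    intro a ha y hy
    rw [Ideal.map_span] at hy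
    induction hy using Submodule.span_induction with
    | mem x hx =>
      obtain ⟨z, ⟨i, rfl⟩, rfl⟩ := hx
      rw [← map_mul]
      exact (Ideal.Quotient.eq_zero_iff_mem).2 (ha i)
    | zero => rw [mul_zero]
    | add x y _ _ hx hy => rw [mul_add, hx, hy, add_zero]
    | smul c x _ hx => rw [smul_eq_mul, ← mul_assoc, mul_comm (mk a) c, mul_assoc, hx, mul_zero]
  have hqsoc : mk q ∈ Soc := soc_of q hqX
  obtain ⟨s, hs, hsJ⟩ := hJν
  have hssoc : mk s ∈ Soc := by
    apply soc_of
    intro i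
    exact hJvan _ (ν + 1) (by omega) (hs.mul (isHomogeneous_X _ _))
  -- the socle has dimension 1, so mk q = c • mk s
  have hsne : (⟨mk s, hssoc⟩ : Soc) ≠ 0 := by
    intro h
    exact hsJ ((Ideal.Quotient.eq_zero_iff_mem).1 (congrArg Subtype.val h))
  have hspan := (finrank_eq_one_iff_of_nonzero (⟨mk s, hssoc⟩ : Soc) hsne).1 hJsoc
  have hmem : (⟨mk q, hqsoc⟩ : Soc) ∈ Submodule.span k {(⟨mk s, hssoc⟩ : Soc)} := by
    rw [hspan]; trivial
  obtain ⟨c, hc⟩ := Submodule.mem_span_singleton.1 hmem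
  have hc' : mk (c • s) = mk q := by
    have := congrArg Subtype.val hc
    exact this
  have hdiff : q - c • s ∈ J := by
    rw [← Ideal.Quotient.eq_zero_iff_mem, map_sub, hc', sub_self]
  -- take the degree-e homogeneous component : it is q itself
  have hcomp := hJhom _ hdiff e
  have h1 : homogeneousComponent e q = q := by
    rw [homogeneousComponent_of_mem ((mem_homogeneousSubmodule _ _).2 hq), if_pos rfl]
  have h2 : homogeneousComponent e (c • s) = 0 := by
    have hcs : (c • s).IsHomogeneous ν := by
      rw [smul_eq_C_mul]; exact hs.C_mul c
    rw [homogeneousComponent_of_mem ((mem_homogeneousSubmodule _ _).2 hcs),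
      if_neg (by omega)]
  rw [map_sub, h1, h2, sub_zero] at hcomp
  exact hqJ hcomp

end Aux

/-- Corollary 2.4(2): if `S/I` and `S/J` are Gorenstein Artin of the same socle degree
`ν`, then `I = J` iff they contain the same forms of degree `ν`. -/
theorem stmt13 {k : Type*} [Field k] [CharZero k] {n ν : ℕ}
    (I J : Ideal (MvPolynomial (Fin n) k))
    (hIhom : ∀ g ∈ I, ∀ j : ℕ, homogeneousComponent j g ∈ I)
    (hIfin : Module.Finite k (MvPolynomial (Fin n) k ⧸ I))
    (hIν : ∃ p : MvPolynomial (Fin n) k, p.IsHomogeneous ν ∧ p ∉ I)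
    (hIvan : ∀ p : MvPolynomial (Fin n) k, ∀ j : ℕ, ν < j → p.IsHomogeneous j → p ∈ I)
    (hIsoc : Module.finrank k
      (socle k (Ideal.map (Ideal.Quotient.mk I)
        (Ideal.span (Set.range (X : Fin n → MvPolynomial (Fin n) k))))) = 1)
    (hJhom : ∀ g ∈ J, ∀ j : ℕ, homogeneousComponent j g ∈ J)
    (hJfin : Module.Finite k (MvPolynomial (Fin n) k ⧸ J))
    (hJν : ∃ p : MvPolynomial (Fin n) k, p.IsHomogeneous ν ∧ p ∉ J)
    (hJvan : ∀ p : MvPolynomial (Fin n) k, ∀ j : ℕ, ν < j → p.IsHomogeneous j → p ∈ J)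
    (hJsoc : Module.finrank k
      (socle k (Ideal.map (Ideal.Quotient.mk J)
        (Ideal.span (Set.range (X : Fin n → MvPolynomial (Fin n) k))))) = 1) :
    I = J ↔ ∀ p : MvPolynomial (Fin n) k, p.IsHomogeneous ν → (p ∈ I ↔ p ∈ J) := by
  constructor
  · rintro rfl p _
    rfl
  · intro hν
    have key : ∀ (I' J' : Ideal (MvPolynomial (Fin n) k)),
        (∀ g ∈ I', ∀ j : ℕ, homogeneousComponent j g ∈ I') →
        (∃ p : MvPolynomial (Fin n) k, p.IsHomogeneous ν ∧ p ∉ J') →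
        (∀ g ∈ J', ∀ j : ℕ, homogeneousComponent j g ∈ J') →
        (∀ p : MvPolynomial (Fin n) k, ∀ j : ℕ, ν < j → p.IsHomogeneous j → p ∈ J') →
        Module.finrank k (socle k (Ideal.map (Ideal.Quotient.mk J')
          (Ideal.span (Set.range (X : Fin n → MvPolynomial (Fin n) k))))) = 1 →
        (∀ p : MvPolynomial (Fin n) k, p.IsHomogeneous ν → (p ∈ I' ↔ p ∈ J')) →
        I' ≤ J' := by
      intro I' J' hIh hJn hJh hJv hJs hag g hg
      have := sum_homogeneousComponent g
      rw [← this]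
      apply Ideal.sum_mem
      intro i _
      exact hom_incl I' J' hJh hJn hJv hJs hag i _ (homogeneousComponent_isHomogeneous i g)
        (hIh g hg i)
    exact le_antisymm
      (key I J hIhom hJν hJhom hJvan hJsoc hν)
      (key J I hJhom hIν hIhom hIvan hIsoc (fun p hp => (hν p hp).symm))
end

section
/- Let 1 ≤ a ≤ n−1 and d ≥ 2. Suppose g_1,…,g_a ∈ k[x_1,…,x_a] is a regular sequence of homogeneous forms of degree d and g_{a+1},…,g_n ∈ k[x_{a+1},…,x_n] is a regular sequence of homogeneous forms of degree d. Let f_1 ∈ k[z_1,…,z_a] be a nonzero homogeneous polynomial of degree a(d−1) such that {g ∈ k[x_1,…,x_a] : g ∘ f_1 = 0} = (g_1,…,g_a) as ideals of k[x_1,…,x_a], and let f_2 ∈ k[z_{a+1},…,z_n] be a nonzero homogeneous polynomial of degree (n−a)(d−1) such that {g ∈ k[x_{a+1},…,x_n] : g ∘ f_2 = 0} = (g_{a+1},…,g_n) as ideals of k[x_{a+1},…,x_n]. Then {g ∈ S : g ∘ (f_1·f_2) = 0} = (g_1,…,g_n) as ideals of S; that is, f_1·f_2 is a homogeneous Macaulay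 inverse system of the balanced complete intersection algebra S/(g_1,…,g_n). -/
open MvPolynomial

section Helpers

variable {k : Type*} [CommRing k] {n : ℕ}

/-- abbreviation for the pderiv endomorphism -/
noncomputable def PD (k : Type*) [CommRing k] {n : ℕ} (i : Fin n) :
    Module.End k (MvPolynomial (Fin n) k) := (pderiv i).toLinearMap

lemma pderiv_comm (i j : Fin n) (p : MvPolynomial (Fin n) k) :
    pderiv i (pderiv j p) = pderiv j (pderiv i p) := by
  induction p using MvPolynomial.induction_on' with
  | monomial m c =>
    simp only [pderiv_monomial]
    rcases eq_or_ne i j with rfl | hij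
    · rfl
    · have h1 : ((m - Finsupp.single j 1 : Fin n →₀ ℕ)) i = m i := by
        simp [Finsupp.tsub_apply, Finsupp.single_apply, hij.symm]
      have h2 : ((m - Finsupp.single i 1 : Fin n →₀ ℕ)) j = m j := by
        simp [Finsupp.tsub_apply, Finsupp.single_apply, hij]
      rw [h1, h2, tsub_tsub, tsub_tsub, add_comm, mul_right_comm]
  | add p q hp hq => simp [hp, hq]

lemma commute_PD (i j : Fin n) : Commute (PD k i) (PD k j) := by
  apply LinearMap.ext
  intro p
  exact pderiv_comm i j p

/-- general list lemma -/
lemma ofFn_prod_mul {M : Type*} [Monoid M] :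
    ∀ {m : ℕ} (A B : Fin m → M), (∀ i j, Commute (A i) (B j)) →
    (List.ofFn fun i => A i * B i).prod = (List.ofFn A).prod * (List.ofFn B).prod := by
  intro m
  induction m with
  | zero => intro A B _; simp
  | succ m ih =>
    intro A B h
    rw [List.ofFn_succ, List.ofFn_succ (f := A), List.ofFn_succ (f := B),
      List.prod_cons, List.prod_cons, List.prod_cons,
      ih (fun i => A i.succ) (fun i => B i.succ) (fun i j => h _ _)]
    have hc : Commute (B 0) (List.ofFn fun i : Fin m => A i.succ).prod := by
      apply Commute.list_prod_right
      intro x hx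
      rw [List.mem_ofFn] at hx
      obtain ⟨i, rfl⟩ := hx
      exact (h i.succ 0).symm
    rw [mul_assoc, ← mul_assoc (B 0), hc.eq, mul_assoc, mul_assoc]

lemma monDiff_add (m m' : Fin n →₀ ℕ) :
    monDiff k (m + m') = monDiff k m * monDiff k m' := by
  unfold monDiff
  have : (List.ofFn fun i : Fin n => ((pderiv i).toLinearMap :
      Module.End k (MvPolynomial (Fin n) k)) ^ ((m + m') i)) =
      List.ofFn fun i : Fin n => (PD k i) ^ (m i) * (PD k i) ^ (m' i) := by
    congr 1; funext i
    rw [Finsupp.add_apply, pow_add]; rfl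
  rw [this, ofFn_prod_mul]
  · rfl
  · intro i j
    exact ((commute_PD i j).pow_pow _ _)

lemma monDiff_zero : monDiff k (0 : Fin n →₀ ℕ) = 1 := by
  unfold monDiff
  apply List.prod_eq_one
  intro x hx
  rw [List.mem_ofFn] at hx
  obtain ⟨i, rfl⟩ := hx
  simp



variable {k : Type*} [CommRing k] {n : ℕ}

lemma apolar_eq_sum (g f : MvPolynomial (Fin n) k) :
    apolar g f = Finsupp.sum (AddMonoidAlgebra.coeff g) fun m c => c • monDiff k m f := rfl

lemma apolar_add_left (g g' f : MvPolynomial (Fin n) k) :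
    apolar (g + g') f = apolar g f + apolar g' f := by
  rw [apolar_eq_sum, apolar_eq_sum, apolar_eq_sum, AddMonoidAlgebra.coeff_add]
  exact Finsupp.sum_add_index' (by simp) (by intro m c c'; rw [add_smul])

lemma apolar_smul_left (c : k) (g f : MvPolynomial (Fin n) k) :
    apolar (c • g) f = c • apolar g f := by
  rw [apolar_eq_sum, apolar_eq_sum, AddMonoidAlgebra.coeff_smul, Finsupp.sum_smul_index' (by simp), Finsupp.smul_sum]
  simp [smul_smul]

lemma apolar_zero_left (f : MvPolynomial (Fin n) k) : apolar 0 f = 0 := by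
  simp [apolar_eq_sum]

lemma apolar_monomial (m : Fin n →₀ ℕ) (c : k) (f : MvPolynomial (Fin n) k) :
    apolar (monomial m c) f = c • monDiff k m f := by
  classical
  unfold apolar
  rcases eq_or_ne c 0 with rfl | hc
  · simp
  · rw [support_monomial]
    simp [hc, coeff_monomial]

lemma apolar_zero_right (g : MvPolynomial (Fin n) k) : apolar g 0 = 0 := by
  simp [apolar]

lemma apolar_add_right (g f f' : MvPolynomial (Fin n) k) :
    apolar g (f + f') = apolar g f + apolar g f' := by
  simp [apolar, Finset.sum_add_distrib]

lemma apolar_smul_right (c : k) (g f : MvPolynomial (Fin n) k) :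
    apolar g (c • f) = c • apolar g f := by
  simp [apolar, Finset.smul_sum, smul_comm c]

lemma apolar_one (f : MvPolynomial (Fin n) k) : apolar 1 f = f := by
  have : (1 : MvPolynomial (Fin n) k) = monomial 0 1 := by simp
  rw [this, apolar_monomial, monDiff_zero]
  simp

lemma apolar_mul (p q f : MvPolynomial (Fin n) k) :
    apolar (p * q) f = apolar p (apolar q f) := by
  induction p using MvPolynomial.induction_on' with
  | add p₁ p₂ h1 h2 => rw [add_mul, apolar_add_left, apolar_add_left, h1, h2]
  | monomial m c =>
    induction q using MvPolynomial.induction_on' with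
    | add q₁ q₂ h1 h2 =>
      rw [mul_add, apolar_add_left, h1, h2, apolar_add_left, apolar_add_right]
    | monomial m' c' =>
      rw [monomial_mul, apolar_monomial, apolar_monomial, apolar_monomial, monDiff_add,
        Module.End.mul_apply, map_smul, smul_smul]




lemma listprod_pres (Q : MvPolynomial (Fin n) k → Prop)
    (l : List (Module.End k (MvPolynomial (Fin n) k)))
    (h : ∀ e ∈ l, ∀ p, Q p → Q (e p)) : ∀ p, Q p → Q (l.prod p) := by
  induction l with
  | nil => intro p hp; simpa using hp
  | cons e t ih =>
    intro p hp
    rw [List.prod_cons, Module.End.mul_apply]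
    exact h e List.mem_cons_self _ (ih (fun e' he' => h e' (List.mem_cons_of_mem _ he')) p hp)

lemma pow_pres (Q : MvPolynomial (Fin n) k → Prop)
    (e : Module.End k (MvPolynomial (Fin n) k)) (he : ∀ p, Q p → Q (e p)) (j : ℕ) :
    ∀ p, Q p → Q ((e ^ j) p) := by
  induction j with
  | zero => intro p hp; simpa using hp
  | succ j ih =>
    intro p hp
    rw [pow_succ, Module.End.mul_apply]
    exact ih _ (he p hp)

lemma monDiff_pres (Q : MvPolynomial (Fin n) k → Prop)
    (hQ : ∀ i : Fin n, ∀ p, Q p → Q (pderiv i p)) (m : Fin n →₀ ℕ) :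
    ∀ p, Q p → Q (monDiff k m p) := by
  apply listprod_pres
  intro e he
  rw [List.mem_ofFn] at he
  obtain ⟨i, rfl⟩ := he
  exact pow_pres Q _ (hQ i) (m i)

lemma listprod_mul_left (l : List (Module.End k (MvPolynomial (Fin n) k)))
    (u : MvPolynomial (Fin n) k) (h : ∀ e ∈ l, ∀ w, e (u * w) = u * e w) :
    ∀ w, l.prod (u * w) = u * l.prod w := by
  induction l with
  | nil => intro w; simp
  | cons e t ih =>
    intro w
    rw [List.prod_cons, Module.End.mul_apply, Module.End.mul_apply,
      ih (fun e' he' => h e' (List.mem_cons_of_mem _ he')), h e List.mem_cons_self]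

lemma pderiv_pow_mul (i : Fin n) (u : MvPolynomial (Fin n) k) (hu : pderiv i u = 0) (j : ℕ) :
    ∀ w, (((pderiv i).toLinearMap : Module.End k (MvPolynomial (Fin n) k)) ^ j) (u * w) =
      u * (((pderiv i).toLinearMap : Module.End k (MvPolynomial (Fin n) k)) ^ j) w := by
  have hpd : ∀ w'', pderiv i (u * w'') = u * pderiv i w'' := by
    intro w''
    rw [pderiv_mul, hu, zero_mul, zero_add]
  induction j with
  | zero => intro w; simp
  | succ j ih =>
    intro w
    rw [pow_succ, Module.End.mul_apply, Module.End.mul_apply]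
    show (((pderiv i).toLinearMap : Module.End k (MvPolynomial (Fin n) k)) ^ j)
        (pderiv i (u * w)) = _
    rw [hpd w, ih]; rfl

lemma monDiff_mul_left (m : Fin n →₀ ℕ) (u : MvPolynomial (Fin n) k)
    (hu : ∀ i : Fin n, m i ≠ 0 → pderiv i u = 0) (w : MvPolynomial (Fin n) k) :
    monDiff k m (u * w) = u * monDiff k m w := by
  apply listprod_mul_left
  intro e he
  rw [List.mem_ofFn] at he
  obtain ⟨i, rfl⟩ := he
  intro w'
  show (((pderiv i).toLinearMap : Module.End k (MvPolynomial (Fin n) k)) ^ (m i)) (u * w') = _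
  rcases eq_or_ne (m i) 0 with h0 | h0
  · rw [h0]; simp
  · rw [pderiv_pow_mul i u (hu i h0)]

variable {kk : Type*} [Field kk]


lemma supp_exp {s : Set (Fin n)} {p : MvPolynomial (Fin n) kk} (hp : p ∈ supported kk s) :
    ∀ m ∈ p.support, ∀ i, m i ≠ 0 → i ∈ s := by
  rw [mem_supported] at hp
  intro m hm i hi
  exact hp (Finset.mem_coe.2 ((mem_vars i).2 ⟨m, hm, Finsupp.mem_support_iff.2 hi⟩))

lemma monomial_mem_supported {s : Set (Fin n)} {m : Fin n →₀ ℕ} (c : kk)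
    (hm : ∀ i, m i ≠ 0 → i ∈ s) : monomial m c ∈ supported kk s := by
  rw [mem_supported]
  rcases eq_or_ne c 0 with rfl | hc
  · simp
  · rw [vars_monomial hc]
    intro i hi
    exact hm i (Finsupp.mem_support_iff.1 (Finset.mem_coe.1 hi))

lemma pderiv_mem_supported {s : Set (Fin n)} {p : MvPolynomial (Fin n) kk} (i : Fin n)
    (hp : p ∈ supported kk s) : pderiv i p ∈ supported kk s := by
  refine Algebra.adjoin_induction (p := fun x _ => pderiv i x ∈ supported kk s)
    ?_ ?_ ?_ ?_ hp
  · rintro x ⟨j, hj, rfl⟩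
    rcases eq_or_ne j i with rfl | hji
    · simp only [pderiv_X_self]; exact one_mem _
    · rw [pderiv_X_of_ne hji]; exact zero_mem _
  · intro r; rw [MvPolynomial.algebraMap_eq, pderiv_C]; exact zero_mem _
  · intro x y hx hy hx' hy'; rw [map_add]; exact add_mem hx' hy'
  · intro x y hx hy hx' hy'
    rw [pderiv_mul]
    exact add_mem (mul_mem hx' hy) (mul_mem hx hy')

lemma pderiv_eq_zero_of_not_mem {s : Set (Fin n)} {p : MvPolynomial (Fin n) kk} {i : Fin n}
    (hi : i ∉ s) (hp : p ∈ supported kk s) : pderiv i p = 0 := by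
  refine Algebra.adjoin_induction (p := fun x _ => pderiv i x = 0) ?_ ?_ ?_ ?_ hp
  · rintro x ⟨j, hj, rfl⟩
    exact pderiv_X_of_ne (fun h => hi (h ▸ hj))
  · intro r; rw [MvPolynomial.algebraMap_eq, pderiv_C]
  · intro x y _ _ hx' hy'; rw [map_add, hx', hy', add_zero]
  · intro x y _ _ hx' hy'; rw [pderiv_mul, hx', hy', mul_zero, zero_mul, add_zero]

end Helpers

section Part5
variable {k : Type*} [CommRing k] {n : ℕ}

lemma apolar_mul_left_const (q u w : MvPolynomial (Fin n) k)
    (hq : ∀ m ∈ q.support, ∀ i : Fin n, m i ≠ 0 → pderiv i u = 0) :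
    apolar q (u * w) = u * apolar q w := by
  unfold apolar
  rw [Finset.mul_sum]
  apply Finset.sum_congr rfl
  intro m hm
  rw [monDiff_mul_left m u (fun i hi => hq m hm i hi), mul_smul_comm]

variable {kk : Type*} [Field kk]

lemma apolar_mem_supported {s : Set (Fin n)} (g : MvPolynomial (Fin n) kk)
    {f : MvPolynomial (Fin n) kk} (hf : f ∈ supported kk s) :
    apolar g f ∈ supported kk s := by
  unfold apolar
  apply sum_mem
  intro m _
  exact Subalgebra.smul_mem _
    (monDiff_pres (· ∈ supported kk s) (fun i p hp => pderiv_mem_supported i hp) m f hf) _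

lemma apolar_split {s t : Set (Fin n)} (hst : ∀ i, i ∈ s → i ∉ t)
    {p q f₁ f₂ : MvPolynomial (Fin n) kk}
    (hp : p ∈ supported kk s) (hq : q ∈ supported kk t)
    (hf₁ : f₁ ∈ supported kk s) (hf₂ : f₂ ∈ supported kk t) :
    apolar (p * q) (f₁ * f₂) = apolar p f₁ * apolar q f₂ := by
  rw [apolar_mul]
  have step1 : apolar q (f₁ * f₂) = f₁ * apolar q f₂ := by
    apply apolar_mul_left_const
    intro m hm i hi
    exact pderiv_eq_zero_of_not_mem (fun hs => hst i hs (supp_exp hq m hm i hi)) hf₁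
  rw [step1]
  have hw : apolar q f₂ ∈ supported kk t := apolar_mem_supported q hf₂
  rw [mul_comm f₁]
  rw [apolar_mul_left_const p _ f₁ (fun m hm i hi =>
    pderiv_eq_zero_of_not_mem (hst i (supp_exp hp m hm i hi)) hw)]
  ring

/-- coefficient of a product with disjoint variable supports -/
lemma coeff_mul_disjoint {s t : Set (Fin n)} (hst : ∀ i, i ∈ s → i ∉ t)
    {h u : MvPolynomial (Fin n) kk} (hh : h ∈ supported kk s) (hu : u ∈ supported kk t)
    (e₁ e₂ : Fin n →₀ ℕ) (he₁ : ∀ i : Fin n, e₁ i ≠ 0 → i ∈ s)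
    (he₂ : ∀ i : Fin n, e₂ i ≠ 0 → i ∈ t) :
    coeff (e₁ + e₂) (h * u) = coeff e₁ h * coeff e₂ u := by
  classical
  rw [coeff_mul]
  rw [Finset.sum_eq_single_of_mem (e₁, e₂) (Finset.HasAntidiagonal.mem_antidiagonal.2 rfl)]
  rintro ⟨x₁, x₂⟩ hx hne
  rw [Finset.HasAntidiagonal.mem_antidiagonal] at hx
  rcases eq_or_ne (coeff x₁ h) 0 with h1 | h1
  · rw [h1, zero_mul]
  rcases eq_or_ne (coeff x₂ u) 0 with h2 | h2
  · rw [h2, mul_zero]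
  exfalso
  have hx1 : ∀ i : Fin n, x₁ i ≠ 0 → i ∈ s :=
    supp_exp hh x₁ (Finsupp.mem_support_iff.2 h1)
  have hx2 : ∀ i : Fin n, x₂ i ≠ 0 → i ∈ t :=
    supp_exp hu x₂ (Finsupp.mem_support_iff.2 h2)
  apply hne
  have hxe : ∀ i : Fin n, x₁ i + x₂ i = e₁ i + e₂ i := by
    intro i
    have := congrArg (fun f : Fin n →₀ ℕ => f i) hx
    simpa using this
  have h₁ : x₁ = e₁ := by
    ext i
    rcases eq_or_ne (x₁ i) 0 with hz | hz
    · rcases eq_or_ne (e₁ i) 0 with hz' | hz'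
      · rw [hz, hz']
      · -- e₁ i ≠ 0 → i ∈ s → x₂ i = 0 and e₂ i = 0
        have his := he₁ i hz'
        have hx2z : x₂ i = 0 := by
          by_contra hc; exact hst i his (hx2 i hc)
        have he2z : e₂ i = 0 := by
          by_contra hc; exact hst i his (he₂ i hc)
        have := hxe i; omega
    · have his := hx1 i hz
      have hx2z : x₂ i = 0 := by
        by_contra hc; exact hst i his (hx2 i hc)
      have he2z : e₂ i = 0 := by
        by_contra hc; exact hst i his (he₂ i hc)
      have := hxe i; omega
  have h₂ : x₂ = e₂ := by
    have : x₁ + x₂ = e₁ + e₂ := hx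
    rw [h₁] at this
    exact add_left_cancel this
  rw [h₁, h₂]

end Part5

section Part6
variable {n : ℕ} {kk : Type*} [Field kk]

lemma coeff_zero_of_not_supp {t : Set (Fin n)} {u : MvPolynomial (Fin n) kk}
    (hu : u ∈ supported kk t) {e : Fin n →₀ ℕ} (he : ¬ ∀ j : Fin n, e j ≠ 0 → j ∈ t) :
    coeff e u = 0 := by
  by_contra hc
  exact he (supp_exp hu e (MvPolynomial.mem_support_iff.2 hc))

lemma indep_products {s t : Set (Fin n)} (hst : ∀ i, i ∈ s → i ∉ t)
    {ι : Type*} (T : Finset ι) (h u : ι → MvPolynomial (Fin n) kk)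
    (hhA : ∀ i ∈ T, h i ∈ supported kk s) (huB : ∀ i ∈ T, u i ∈ supported kk t)
    (hind : ∀ c : ι → kk, (∑ i ∈ T, c i • h i) = 0 → ∀ i ∈ T, c i = 0)
    (hsum : ∑ i ∈ T, h i * u i = 0) : ∀ i ∈ T, u i = 0 := by
  intro i₀ hi₀
  apply MvPolynomial.ext
  intro e₂
  rw [coeff_zero]
  by_cases he₂ : ∀ j : Fin n, e₂ j ≠ 0 → j ∈ t
  · set c : ι → kk := fun i => coeff e₂ (u i) with hc
    have hv : (∑ i ∈ T, c i • h i) = 0 := by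
      apply MvPolynomial.ext
      intro e
      rw [coeff_zero]
      by_cases he : ∀ j : Fin n, e j ≠ 0 → j ∈ s
      · have : coeff e (∑ i ∈ T, c i • h i) = ∑ i ∈ T, c i * coeff e (h i) := by
          rw [MvPolynomial.coeff_sum]
          exact Finset.sum_congr rfl fun i _ => coeff_smul e (c i) (h i)
        rw [this]
        have : ∑ i ∈ T, c i * coeff e (h i) = coeff (e + e₂) (∑ i ∈ T, h i * u i) := by
          rw [MvPolynomial.coeff_sum]
          apply Finset.sum_congr rfl
          intro i hi
          rw [coeff_mul_disjoint hst (hhA i hi) (huB i hi) e e₂ he he₂, mul_comm]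
        rw [this, hsum, coeff_zero]
      · apply coeff_zero_of_not_supp (t := s) _ he
        apply sum_mem
        intro i hi
        exact Subalgebra.smul_mem _ (hhA i hi) _
    exact hind c hv i₀ hi₀
  · exact coeff_zero_of_not_supp (huB i₀ hi₀) he₂

end Part6

section Part7
variable {k : Type*} [CommRing k] {n : ℕ}

lemma apolar_sum_left {ι : Type*} (T : Finset ι) (p : ι → MvPolynomial (Fin n) k)
    (f : MvPolynomial (Fin n) k) :
    apolar (∑ i ∈ T, p i) f = ∑ i ∈ T, apolar (p i) f := by
  induction T using Finset.cons_induction with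
  | empty => simp [apolar_zero_left]
  | cons i T hi ih => rw [Finset.sum_cons, Finset.sum_cons, apolar_add_left, ih]

lemma apolar_finsupp_sum_left {ι : Type*} (c : ι →₀ MvPolynomial (Fin n) k)
    (e : ι → MvPolynomial (Fin n) k) (f : MvPolynomial (Fin n) k) :
    apolar (c.sum fun i r => e i * r) f = ∑ i ∈ c.support, apolar (e i * c i) f := by
  rw [Finsupp.sum, apolar_sum_left]

end Part7

set_option maxHeartbeats 1000000 in
set_option synthInstance.maxHeartbeats 1000000 in
/-- Lemma 2.10: if `f₁` is a Macaulay inverse system of `k[x_1,…,x_a]/(g_1,…,g_a)` and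
`f₂` is a Macaulay inverse system of `k[x_{a+1},…,x_n]/(g_{a+1},…,g_n)`, then `f₁ ⬝ f₂`
is a Macaulay inverse system of `S/(g_1,…,g_n)`. -/
theorem stmt17 {k : Type*} [Field k] [CharZero k] {n d a : ℕ} (hd : 2 ≤ d)
    (ha1 : 1 ≤ a) (ha2 : a ≤ n - 1)
    (g : Fin n → MvPolynomial (Fin n) k)
    (hhom : ∀ i, (g i).IsHomogeneous d)
    (hg1 : ∀ i : Fin n, (i : ℕ) < a → g i ∈ MvPolynomial.supported k {l : Fin n | (l : ℕ) < a})
    (hg2 : ∀ i : Fin n, a ≤ (i : ℕ) → g i ∈ MvPolynomial.supported k {l : Fin n | a ≤ (l : ℕ)})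
    (hreg1 : RingTheory.Sequence.IsRegular (MvPolynomial.supported k {l : Fin n | (l : ℕ) < a})
      (List.ofFn fun j : Fin a =>
        (⟨g (Fin.castLE (ha2.trans (Nat.sub_le n 1)) j), hg1 (Fin.castLE (ha2.trans (Nat.sub_le n 1)) j) j.isLt⟩ :
          MvPolynomial.supported k {l : Fin n | (l : ℕ) < a})))
    (hreg2 : RingTheory.Sequence.IsRegular (MvPolynomial.supported k {l : Fin n | a ≤ (l : ℕ)})
      (List.ofFn fun j : Fin (n - a) =>
        (⟨g ⟨a + (j : ℕ), by have := j.isLt; omega⟩,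
          hg2 ⟨a + (j : ℕ), by have := j.isLt; omega⟩ (Nat.le_add_right a j)⟩ :
          MvPolynomial.supported k {l : Fin n | a ≤ (l : ℕ)})))
    (f₁ : MvPolynomial (Fin n) k) (hf₁0 : f₁ ≠ 0)
    (hf₁supp : f₁ ∈ MvPolynomial.supported k {l : Fin n | (l : ℕ) < a})
    (hf₁hom : f₁.IsHomogeneous (a * (d - 1)))
    (hf₁perp : ∀ q : MvPolynomial.supported k {l : Fin n | (l : ℕ) < a},
      apolar (q : MvPolynomial (Fin n) k) f₁ = 0 ↔
        q ∈ Ideal.span {q' : MvPolynomial.supported k {l : Fin n | (l : ℕ) < a} |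
          ∃ j : Fin a, (q' : MvPolynomial (Fin n) k) = g (Fin.castLE (ha2.trans (Nat.sub_le n 1)) j)})
    (f₂ : MvPolynomial (Fin n) k) (hf₂0 : f₂ ≠ 0)
    (hf₂supp : f₂ ∈ MvPolynomial.supported k {l : Fin n | a ≤ (l : ℕ)})
    (hf₂hom : f₂.IsHomogeneous ((n - a) * (d - 1)))
    (hf₂perp : ∀ q : MvPolynomial.supported k {l : Fin n | a ≤ (l : ℕ)},
      apolar (q : MvPolynomial (Fin n) k) f₂ = 0 ↔
        q ∈ Ideal.span {q' : MvPolynomial.supported k {l : Fin n | a ≤ (l : ℕ)} |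
          ∃ j : Fin (n - a), (q' : MvPolynomial (Fin n) k) = g ⟨a + (j : ℕ), by have := j.isLt; omega⟩}) :
    ∀ q : MvPolynomial (Fin n) k,
      apolar q (f₁ * f₂) = 0 ↔ q ∈ Ideal.span (Set.range g) := by
  classical
  set Aset : Set (Fin n) := {l : Fin n | (l : ℕ) < a} with hAset
  set Bset : Set (Fin n) := {l : Fin n | a ≤ (l : ℕ)} with hBset
  have hdisj : ∀ i, i ∈ Aset → i ∉ Bset := by
    intro i h1 h2
    rw [hAset, Set.mem_setOf_eq] at h1
    rw [hBset, Set.mem_setOf_eq] at h2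
    omega
  set I : Ideal (MvPolynomial (Fin n) k) := Ideal.span (Set.range g) with hI
  -- generators annihilate f₁ * f₂
  have hgen : ∀ i : Fin n, apolar (g i) (f₁ * f₂) = 0 := by
    intro i
    rcases lt_or_ge (i : ℕ) a with hi | hi
    · have h1 : apolar (g i * 1) (f₁ * f₂) = apolar (g i) f₁ * apolar 1 f₂ :=
        apolar_split hdisj (hg1 i hi) (one_mem _) hf₁supp hf₂supp
      have h2 : apolar (g i) f₁ = 0 := by
        refine (hf₁perp ⟨g i, hg1 i hi⟩).2 ?_
        apply Ideal.subset_span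
        refine ⟨⟨(i : ℕ), hi⟩, ?_⟩
        show g i = g _
        congr 1
      rw [mul_one] at h1
      rw [h1, h2, zero_mul]
    · have h1 : apolar (1 * g i) (f₁ * f₂) = apolar 1 f₁ * apolar (g i) f₂ :=
        apolar_split hdisj (one_mem _) (hg2 i hi) hf₁supp hf₂supp
      have h2 : apolar (g i) f₂ = 0 := by
        refine (hf₂perp ⟨g i, hg2 i hi⟩).2 ?_
        apply Ideal.subset_span
        refine ⟨⟨(i : ℕ) - a, by omega⟩, ?_⟩
        show g i = g _
        congr 1
        apply Fin.ext
        show (i : ℕ) = a + ((i : ℕ) - a)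
        omega
      rw [one_mul] at h1
      rw [h1, h2, mul_zero]
  -- the whole ideal annihilates
  have hIperp : ∀ x ∈ I, apolar x (f₁ * f₂) = 0 := by
    intro x hx
    refine Submodule.span_induction ?_ ?_ ?_ ?_ hx
    · rintro x ⟨i, rfl⟩; exact hgen i
    · exact apolar_zero_left _
    · intro x y _ _ hx' hy'; rw [apolar_add_left, hx', hy', add_zero]
    · intro r x _ hx'
      rw [smul_eq_mul, apolar_mul, hx', apolar_zero_right]
  -- kernels push into I
  have hkerA : ∀ v : MvPolynomial (Fin n) k, v ∈ supported k Aset → apolar v f₁ = 0 → v ∈ I := by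
    intro v hv h0
    have hmem := (hf₁perp ⟨v, hv⟩).1 h0
    have hpush : ∀ x : supported k Aset,
        x ∈ Ideal.span {q' : MvPolynomial.supported k {l : Fin n | (l : ℕ) < a} |
          ∃ j : Fin a, (q' : MvPolynomial (Fin n) k) = g (Fin.castLE (ha2.trans (Nat.sub_le n 1)) j)} →
        (x : MvPolynomial (Fin n) k) ∈ I := by
      intro x hx
      refine Submodule.span_induction ?_ ?_ ?_ ?_ hx
      · rintro y ⟨j, hj⟩
        rw [hj]
        exact Ideal.subset_span ⟨_, rfl⟩
      · simpa using I.zero_mem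
      · intro x y _ _ hx' hy'
        push_cast
        exact add_mem hx' hy'
      · intro r x _ hx'
        rw [smul_eq_mul]
        push_cast
        exact I.mul_mem_left _ hx'
    exact hpush ⟨v, hv⟩ hmem
  have hkerB : ∀ v : MvPolynomial (Fin n) k, v ∈ supported k Bset → apolar v f₂ = 0 → v ∈ I := by
    intro v hv h0
    have hmem := (hf₂perp ⟨v, hv⟩).1 h0
    have hpush : ∀ x : supported k Bset,
        x ∈ Ideal.span {q' : MvPolynomial.supported k {l : Fin n | a ≤ (l : ℕ)} |
          ∃ j : Fin (n - a), (q' : MvPolynomial (Fin n) k) = g ⟨a + (j : ℕ), by have := j.isLt; omega⟩} →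
        (x : MvPolynomial (Fin n) k) ∈ I := by
      intro x hx
      refine Submodule.span_induction ?_ ?_ ?_ ?_ hx
      · rintro y ⟨j, hj⟩
        rw [hj]
        exact Ideal.subset_span ⟨_, rfl⟩
      · simpa using I.zero_mem
      · intro x y _ _ hx' hy'
        push_cast
        exact add_mem hx' hy'
      · intro r x _ hx'
        rw [smul_eq_mul]
        push_cast
        exact I.mul_mem_left _ hx'
    exact hpush ⟨v, hv⟩ hmem
  -- submodule setup
  set AS : Submodule k (MvPolynomial (Fin n) k) :=
    Subalgebra.toSubmodule (supported k Aset) with hASdef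
  set BS : Submodule k (MvPolynomial (Fin n) k) :=
    Subalgebra.toSubmodule (supported k Bset) with hBSdef
  set I' : Submodule k (MvPolynomial (Fin n) k) := Submodule.restrictScalars k I with hI'def
  set U₁ : Submodule k (MvPolynomial (Fin n) k) := AS ⊓ I' with hU₁def
  set U₂ : Submodule k (MvPolynomial (Fin n) k) := BS ⊓ I' with hU₂def
  obtain ⟨V₁', hV₁'⟩ := Submodule.exists_isCompl (Submodule.comap AS.subtype U₁)
  obtain ⟨V₂', hV₂'⟩ := Submodule.exists_isCompl (Submodule.comap BS.subtype U₂)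
  set V₁ : Submodule k (MvPolynomial (Fin n) k) := V₁'.map AS.subtype with hV₁def
  set V₂ : Submodule k (MvPolynomial (Fin n) k) := V₂'.map BS.subtype with hV₂def
  have hV₁le : V₁ ≤ AS := Submodule.map_subtype_le _ _
  have hV₂le : V₂ ≤ BS := Submodule.map_subtype_le _ _
  have hU₁le : U₁ ≤ AS := inf_le_left
  have hU₂le : U₂ ≤ BS := inf_le_left
  have e₁ : Submodule.map AS.subtype (Submodule.comap AS.subtype U₁) = U₁ := by
    rw [Submodule.map_comap_subtype]
    exact inf_eq_right.2 hU₁le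
  have e₂ : Submodule.map BS.subtype (Submodule.comap BS.subtype U₂) = U₂ := by
    rw [Submodule.map_comap_subtype]
    exact inf_eq_right.2 hU₂le
  have hsup₁ : U₁ ⊔ V₁ = AS := by
    rw [hV₁def, ← e₁, ← Submodule.map_sup, hV₁'.sup_eq_top, Submodule.map_subtype_top]
  have hsup₂ : U₂ ⊔ V₂ = BS := by
    rw [hV₂def, ← e₂, ← Submodule.map_sup, hV₂'.sup_eq_top, Submodule.map_subtype_top]
  have hinf₁ : U₁ ⊓ V₁ = ⊥ := by
    rw [hV₁def, ← e₁, ← Submodule.map_inf _ (Submodule.injective_subtype AS),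
      hV₁'.inf_eq_bot, Submodule.map_bot]
  have hinf₂ : U₂ ⊓ V₂ = ⊥ := by
    rw [hV₂def, ← e₂, ← Submodule.map_inf _ (Submodule.injective_subtype BS),
      hV₂'.inf_eq_bot, Submodule.map_bot]
  set b₁ := Module.Basis.ofVectorSpace k ↥V₁ with hb₁
  set M : Module.Basis.ofVectorSpaceIndex k ↥V₁ → MvPolynomial (Fin n) k :=
    fun i => ((b₁ i : ↥V₁) : MvPolynomial (Fin n) k) with hM
  have hMA : ∀ i, M i ∈ supported k Aset := fun i => hV₁le (SetLike.coe_mem (b₁ i))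
  have hMV : ∀ i, M i ∈ V₁ := fun i => SetLike.coe_mem (b₁ i)
  -- reduction lemma
  set Pred : MvPolynomial (Fin n) k → Prop := fun p =>
    ∃ c : Module.Basis.ofVectorSpaceIndex k ↥V₁ →₀ MvPolynomial (Fin n) k,
      (∀ i, c i ∈ supported k Bset) ∧
      p - (c.sum fun i r => M i * r) ∈ I with hPred
  have hredzero : Pred 0 := by
    refine ⟨0, fun i => by rw [Finsupp.zero_apply]; exact zero_mem _, ?_⟩
    rw [Finsupp.sum_zero_index]
    simpa using I.zero_mem
  have hredadd : ∀ p₁ p₂, Pred p₁ → Pred p₂ → Pred (p₁ + p₂) := by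
    rintro p₁ p₂ ⟨c₁, hc₁, hd₁⟩ ⟨c₂, hc₂, hd₂⟩
    refine ⟨c₁ + c₂, fun i => add_mem (hc₁ i) (hc₂ i), ?_⟩
    rw [Finsupp.sum_add_index' (fun i => mul_zero _) (fun i r₁ r₂ => mul_add _ _ _)]
    have := add_mem hd₁ hd₂
    rwa [sub_add_sub_comm] at this
  have hredmon : ∀ (m : Fin n →₀ ℕ) (co : k), Pred (monomial m co) := by
    intro m co
    set m₁ := m.filter (fun i : Fin n => (i : ℕ) < a) with hm₁
    set m₂ := m.filter (fun i : Fin n => ¬ (i : ℕ) < a) with hm₂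
    have hm : m₁ + m₂ = m := Finsupp.filter_pos_add_filter_neg m _
    have hmon : monomial m co = monomial m₁ co * monomial m₂ 1 := by
      rw [monomial_mul, mul_one, hm]
    have hm₁A : ∀ i : Fin n, m₁ i ≠ 0 → i ∈ Aset := by
      intro i hi
      rw [hm₁, Finsupp.filter_apply] at hi
      by_contra hc
      rw [if_neg (by simpa [hAset, Set.mem_setOf_eq] using hc)] at hi
      exact hi rfl
    have hm₂B : ∀ i : Fin n, m₂ i ≠ 0 → i ∈ Bset := by
      intro i hi
      rw [hm₂, Finsupp.filter_apply] at hi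
      by_contra hc
      have : (i : ℕ) < a := by
        rw [hBset, Set.mem_setOf_eq] at hc
        omega
      rw [if_neg (by simpa using this)] at hi
      exact hi rfl
    have hmA : monomial m₁ co ∈ AS := monomial_mem_supported co hm₁A
    rw [← hsup₁] at hmA
    obtain ⟨w, hwU, v, hvV, hvw⟩ := Submodule.mem_sup.1 hmA
    set ℓ := b₁.repr ⟨v, hvV⟩ with hℓ
    refine ⟨ℓ.mapRange (fun t => t • monomial m₂ 1) (by simp), ?_, ?_⟩
    · intro i
      rw [Finsupp.mapRange_apply]
      exact Subalgebra.smul_mem _ (monomial_mem_supported 1 hm₂B) _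
    · have hsum : (ℓ.mapRange (fun t => t • monomial m₂ 1) (by simp)).sum
          (fun i r => M i * r) = v * monomial m₂ 1 := by
        rw [Finsupp.sum_mapRange_index (fun i => mul_zero _)]
        have step : (ℓ.sum fun i t => M i * (t • monomial m₂ 1))
            = (ℓ.sum fun i t => t • M i) * monomial m₂ 1 := by
          rw [Finsupp.sum_mul]
          apply Finsupp.sum_congr
          intro i _
          rw [smul_mul_assoc, mul_smul_comm]
        rw [step]
        congr 1
        have hrepr := b₁.linearCombination_repr ⟨v, hvV⟩
        have hcoe := congrArg (V₁.subtype) hrepr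
        rw [Finsupp.linearCombination_apply] at hcoe
        rw [map_finsuppSum] at hcoe
        simpa using hcoe
      rw [hsum, hmon]
      have : monomial m₁ co * monomial m₂ 1 - v * monomial m₂ 1
          = w * monomial m₂ 1 := by
        rw [← hvw]; ring
      rw [this]
      exact I.mul_mem_right _ ((Submodule.mem_inf.1 hwU).2)
  have hred : ∀ p : MvPolynomial (Fin n) k, Pred p := by
    intro p
    rw [as_sum p]
    exact Finset.sum_induction _ Pred hredadd hredzero (fun m _ => hredmon m _)
  -- main equivalence
  intro q
  constructor
  swap
  · exact fun hq => hIperp q hq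
  intro hq0
  obtain ⟨c, hcB, hdiff⟩ := hred q
  have hdec : ∀ i, ∃ uv : MvPolynomial (Fin n) k × MvPolynomial (Fin n) k,
      uv.1 ∈ V₂ ∧ uv.2 ∈ U₂ ∧ c i = uv.1 + uv.2 := by
    intro i
    have h := hcB i
    have h' : c i ∈ U₂ ⊔ V₂ := by rw [hsup₂]; exact h
    obtain ⟨w, hw, u, hu, huw⟩ := Submodule.mem_sup.1 h'
    exact ⟨(u, w), hu, hw, by rw [← huw]; ring⟩
  choose uv huV huU hcuv using hdec
  set u : Module.Basis.ofVectorSpaceIndex k ↥V₁ → MvPolynomial (Fin n) k := fun i => (uv i).1 with hu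
  set ρ' : MvPolynomial (Fin n) k := ∑ i ∈ c.support, M i * u i with hρ'
  have hρdiff : q - ρ' ∈ I := by
    have h2 : c.sum (fun i r => M i * r) - ρ' ∈ I := by
      rw [Finsupp.sum, hρ', ← Finset.sum_sub_distrib]
      apply sum_mem
      intro i hi
      have : M i * c i - M i * u i = M i * (uv i).2 := by
        rw [hcuv i, hu]; ring
      rw [this]
      exact I.mul_mem_left _ ((Submodule.mem_inf.1 (huU i)).2)
    have := add_mem hdiff h2
    rwa [sub_add_sub_cancel] at this
  have hρ0 : apolar ρ' (f₁ * f₂) = 0 := by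
    have h := apolar_add_left (q - ρ') ρ' (f₁ * f₂)
    rw [sub_add_cancel, hq0, hIperp _ hρdiff, zero_add] at h
    exact h.symm
  have hsplit : apolar ρ' (f₁ * f₂)
      = ∑ i ∈ c.support, (apolar (M i) f₁) * (apolar (u i) f₂) := by
    rw [hρ', apolar_sum_left]
    apply Finset.sum_congr rfl
    intro i _
    exact apolar_split hdisj (hMA i) (hV₂le (huV i)) hf₁supp hf₂supp
  have hind : ∀ cc : Module.Basis.ofVectorSpaceIndex k ↥V₁ → k,
      (∑ i ∈ c.support, cc i • apolar (M i) f₁) = 0 → ∀ i ∈ c.support, cc i = 0 := by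
    intro cc hcc i hi
    have h1 : apolar (∑ j ∈ c.support, cc j • M j) f₁ = 0 := by
      rw [apolar_sum_left]
      have : ∀ j ∈ c.support, apolar (cc j • M j) f₁ = cc j • apolar (M j) f₁ :=
        fun j _ => apolar_smul_left _ _ _
      rw [Finset.sum_congr rfl this]
      exact hcc
    set v := ∑ j ∈ c.support, cc j • M j with hv
    have hvAS : v ∈ supported k Aset :=
      sum_mem fun j _ => Subalgebra.smul_mem _ (hMA j) _
    have hvI : v ∈ I := hkerA v hvAS h1
    have hvV₁ : v ∈ V₁ := sum_mem fun j _ => Submodule.smul_mem _ _ (hMV j)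
    have hv0 : v = 0 := by
      have : v ∈ U₁ ⊓ V₁ := ⟨Submodule.mem_inf.2 ⟨hvAS, hvI⟩, hvV₁⟩
      rw [hinf₁] at this
      simpa using this
    have hsub : (∑ j ∈ c.support, cc j • b₁ j : ↥V₁) = 0 := by
      apply Subtype.ext
      have : ((∑ j ∈ c.support, cc j • b₁ j : ↥V₁) : MvPolynomial (Fin n) k) = v := by
        rw [hv]
        push_cast
        rfl
      rw [this, hv0]
      rfl
    exact linearIndependent_iff'.1 b₁.linearIndependent c.support cc hsub i hi
  have hu0 : ∀ i ∈ c.support, apolar (u i) f₂ = 0 := by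
    apply indep_products hdisj c.support (fun i => apolar (M i) f₁)
      (fun i => apolar (u i) f₂)
      (fun i _ => apolar_mem_supported _ hf₁supp)
      (fun i _ => apolar_mem_supported _ hf₂supp)
      hind
    rw [← hsplit]
    exact hρ0
  have huz : ∀ i ∈ c.support, u i = 0 := by
    intro i hi
    have h1 : u i ∈ I := hkerB (u i) (hV₂le (huV i)) (hu0 i hi)
    have : u i ∈ U₂ ⊓ V₂ :=
      ⟨Submodule.mem_inf.2 ⟨hV₂le (huV i), h1⟩, huV i⟩
    rw [hinf₂] at this
    simpa using this
  have hρz : ρ' = 0 := by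
    rw [hρ']
    apply Finset.sum_eq_zero
    intro i hi
    rw [huz i hi, mul_zero]
  have : q - ρ' ∈ I := hρdiff
  rw [hρz, sub_zero] at this
  exact this
end
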